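/- arXiv:1910.05618 — 3 statements merged into one kernel-verified Lean document; each statement's English description precedes it below -/
import Mathlib

section
/- Let (V, Φ) be a reduced irreducible root system with base Δ and let α ∈ Δ. The fundamental weight η(α) is quasi-constant if and only if α is special or co-special. -/
open scoped BigOperators

/-- A reduced irreducible root system, with a choice of base of simple roots,
in a finite-dimensional `ℚ`-vector space `V` equipped with a positive definite
symmetric bilinear form. -/
structure RootSystemBase (V : Type*) [AddCommGroup V] [Module ℚ V] : Type _ where
  /-- the symmetric bilinear form `( , )` -/
  B : V →ₗ[ℚ] V →ₗ[ℚ] ℚ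
  B_symm : ∀ u v : V, B u v = B v u
  B_posdef : ∀ v : V, v ≠ 0 → 0 < B v v
  /-- the (finite) set of roots -/
  Φ : Finset V
  zero_notMem : (0 : V) ∉ Φ
  span_top : Submodule.span ℚ (Φ : Set V) = ⊤
  reflect_mem : ∀ β ∈ Φ, ∀ γ ∈ Φ, γ - (2 * B β γ / B β β) • β ∈ Φ
  integral : ∀ β ∈ Φ, ∀ γ ∈ Φ, ∃ n : ℤ, 2 * B β γ / B β β = (n : ℚ)
  reduced : ∀ β ∈ Φ, ∀ c : ℚ, c • β ∈ Φ → c = 1 ∨ c = -1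
  irreducible : ∀ s ⊆ Φ, s.Nonempty →
    (∀ β ∈ s, ∀ γ ∈ Φ, γ ∉ s → B β γ = 0) → s = Φ
  /-- the base of simple roots -/
  Δ : Finset V
  Δ_sub : Δ ⊆ Φ
  Δ_indep : LinearIndependent ℚ (Subtype.val : {x : V // x ∈ Δ} → V)
  /-- `coord v α` is the coefficient of the simple root `α` when `v` is written in the basis `Δ` -/
  coord : V → V → ℚ
  coord_spec : ∀ v : V, v = ∑ α ∈ Δ, coord v α • α
  coord_int : ∀ β ∈ Φ, ∀ α ∈ Δ, ∃ n : ℤ, coord β α = (n : ℚ)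
  pos_or_neg : ∀ β ∈ Φ, (∀ α ∈ Δ, 0 ≤ coord β α) ∨ (∀ α ∈ Δ, coord β α ≤ 0)

namespace RootSystemBase

variable {V : Type*} [AddCommGroup V] [Module ℚ V] (P : RootSystemBase V)

/-- the coroot `β^∨ = 2β/(β,β)` -/
noncomputable def coroot (β : V) : V := (2 / P.B β β) • β

/-- `m^∨_β(α)`: the coefficient of `α^∨` when `β^∨` is written in the basis `Δ^∨` -/
noncomputable def corootMult (β α : V) : ℚ := P.coord (P.coroot β) α * (P.B α α / 2)

/-- the positive roots `Φ⁺` determined by the base `Δ` -/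
noncomputable def posRoots : Finset V := P.Φ.filter (fun β => ∀ α ∈ P.Δ, 0 ≤ P.coord β α)

/-- a root is long if its length is maximal -/
def IsLong (β : V) : Prop := ∀ γ ∈ P.Φ, P.B γ γ ≤ P.B β β

/-- a root is short if its length is minimal -/
def IsShort (β : V) : Prop := ∀ γ ∈ P.Φ, P.B β β ≤ P.B γ γ

/-- `h` is the highest root: every (positive) root has smaller multiplicities -/
def IsHighestRoot (h : V) : Prop :=
  h ∈ P.Φ ∧ ∀ β ∈ P.posRoots, ∀ α ∈ P.Δ, P.coord β α ≤ P.coord h α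

/-- `h₂` is the root whose coroot is the highest root of the dual system `Φ^∨` -/
def IsDualHighest (h₂ : V) : Prop :=
  h₂ ∈ P.Φ ∧ ∀ β ∈ P.posRoots, ∀ α ∈ P.Δ, P.corootMult β α ≤ P.corootMult h₂ α

/-- a simple root `α` is special if `m_{α^h}(α) = 1` -/
def IsSpecial (α : V) : Prop :=
  α ∈ P.Δ ∧ ∀ h : V, P.IsHighestRoot h → P.coord h α = 1

/-- a simple root `α` is co-special if `m^∨_{α^{h₂}}(α) = 1` -/
def IsCospecial (α : V) : Prop :=
  α ∈ P.Δ ∧ ∀ h₂ : V, P.IsDualHighest h₂ → P.corootMult h₂ α = 1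

/-- the reflection `s_β` in a root `β` (junk value `id` if `(β,β) = 0`) -/
noncomputable def refl (β : V) : V ≃ₗ[ℚ] V :=
  if h : P.B β β ≠ 0 then
    Module.reflection (x := β) (f := (2 / P.B β β) • P.B β)
      (by simp only [LinearMap.smul_apply, smul_eq_mul]; field_simp)
  else LinearEquiv.refl ℚ V

/-- the Weyl group `W`, as a group of linear automorphisms of `V` -/
noncomputable def weylGroup : Subgroup (V ≃ₗ[ℚ] V) :=
  Subgroup.closure { g | ∃ β ∈ P.Φ, g = P.refl β }

/-- the Weyl group `W_α` of the maximal Levi determined by `α ∈ Δ`, generated by the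
simple reflections `s_{α'}`, `α' ∈ Δ \ {α}` -/
noncomputable def leviWeyl (α : V) : Subgroup (V ≃ₗ[ℚ] V) :=
  Subgroup.closure { g | ∃ α' ∈ P.Δ, α' ≠ α ∧ g = P.refl α' }

/-- `v` is `Δ`-dominant -/
def IsDominant (v : V) : Prop := ∀ α ∈ P.Δ, 0 ≤ P.B v α

/-- `v` is `(Δ \ {α})`-dominant -/
def IsDominantAway (α v : V) : Prop := ∀ α' ∈ P.Δ, α' ≠ α → 0 ≤ P.B v α'

/-- `χ` is quasi-constant -/
def IsQuasiConstant (χ : V) : Prop :=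
  ∀ β ∈ P.Φ, P.B χ (P.coroot β) ≠ 0 → ∀ w ∈ P.weylGroup,
    P.B χ (w (P.coroot β)) / P.B χ (P.coroot β) ∈ ({-1, 0, 1} : Set ℚ)

end RootSystemBase

section Lemmas

open Finset

namespace RootSystemBase

variable {V : Type*} [AddCommGroup V] [Module ℚ V] (P : RootSystemBase V)

open scoped Classical

lemma B_self_nonneg (v : V) : 0 ≤ P.B v v := by
  rcases eq_or_ne v 0 with rfl | h
  · simp
  · exact (P.B_posdef v h).le

lemma root_ne_zero {β : V} (hβ : β ∈ P.Φ) : β ≠ 0 := fun h => P.zero_notMem (h ▸ hβ)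

lemma B_root_pos {β : V} (hβ : β ∈ P.Φ) : 0 < P.B β β := P.B_posdef β (P.root_ne_zero hβ)

lemma neg_mem {β : V} (hβ : β ∈ P.Φ) : -β ∈ P.Φ := by
  have := P.reflect_mem β hβ β hβ
  have h : P.B β β ≠ 0 := (P.B_root_pos hβ).ne'
  rw [show 2 * P.B β β / P.B β β = 2 by field_simp] at this
  simpa [two_smul] using this

/-- Cauchy-Schwarz: strict unless `γ` is a multiple of `β`. -/
lemma cs_strict {β γ : V} (hβ : β ≠ 0) (h : ∀ c : ℚ, γ ≠ c • β) :
    (P.B β γ) ^ 2 < P.B β β * P.B γ γ := by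
  have hBβ : 0 < P.B β β := P.B_posdef β hβ
  set t : ℚ := P.B β γ / P.B β β with ht
  have hu : γ - t • β ≠ 0 := fun hc => h t (by rw [← sub_eq_zero]; exact hc)
  have h0 : 0 < P.B (γ - t • β) (γ - t • β) := P.B_posdef _ hu
  have hexp : P.B (γ - t • β) (γ - t • β)
      = P.B γ γ - 2 * t * P.B β γ + t ^ 2 * P.B β β := by
    simp only [map_sub, map_smul, LinearMap.sub_apply, LinearMap.smul_apply, smul_eq_mul]
    rw [P.B_symm γ β]
    ring
  rw [hexp, ht] at h0
  have : 0 < P.B γ γ - (P.B β γ) ^ 2 / P.B β β := by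
    field_simp at h0 ⊢
    nlinarith [h0]
  have h2 : (P.B β γ) ^ 2 / P.B β β < P.B γ γ := by linarith
  calc (P.B β γ) ^ 2 = ((P.B β γ) ^ 2 / P.B β β) * P.B β β := by field_simp
    _ < P.B γ γ * P.B β β := by
        exact mul_lt_mul_of_pos_right h2 hBβ
    _ = P.B β β * P.B γ γ := mul_comm _ _

/-- uniqueness of coordinates w.r.t. the base -/
lemma coord_unique {c : V → ℚ} (h : ∑ δ ∈ P.Δ, c δ • δ = 0) : ∀ δ ∈ P.Δ, c δ = 0 := by
  intro δ hδ
  have hind := Fintype.linearIndependent_iff.mp P.Δ_indep (fun i => c i.1)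
  have hsum : ∑ i : {x : V // x ∈ P.Δ}, c i.1 • i.1 = 0 := by
    rw [← Finset.sum_attach P.Δ (fun x => c x • x)] at h
    simpa [Finset.sum_attach] using h
  exact hind hsum ⟨δ, hδ⟩

lemma coord_eq {v : V} {c : V → ℚ} (h : v = ∑ δ ∈ P.Δ, c δ • δ) :
    ∀ δ ∈ P.Δ, P.coord v δ = c δ := by
  intro δ hδ
  have h2 : ∑ δ ∈ P.Δ, (P.coord v δ - c δ) • δ = 0 := by
    simp only [sub_smul, Finset.sum_sub_distrib]
    rw [← P.coord_spec v, ← h]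
    simp
  have := P.coord_unique h2 δ hδ
  linarith

lemma coord_add (u v : V) : ∀ δ ∈ P.Δ, P.coord (u + v) δ = P.coord u δ + P.coord v δ := by
  intro δ hδ
  refine P.coord_eq (c := fun δ => P.coord u δ + P.coord v δ) ?_ δ hδ
  rw [Finset.sum_congr rfl (fun δ _ => add_smul (P.coord u δ) (P.coord v δ) δ),
    Finset.sum_add_distrib]
  rw [← P.coord_spec u, ← P.coord_spec v]

lemma coord_smul (c : ℚ) (v : V) : ∀ δ ∈ P.Δ, P.coord (c • v) δ = c * P.coord v δ := by
  intro δ hδ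
  refine P.coord_eq (c := fun δ => c * P.coord v δ) ?_ δ hδ
  rw [Finset.sum_congr rfl (fun δ _ => mul_smul c (P.coord v δ) δ), ← Finset.smul_sum]
  rw [← P.coord_spec v]

lemma coord_neg (v : V) : ∀ δ ∈ P.Δ, P.coord (-v) δ = - P.coord v δ := by
  intro δ hδ
  have := P.coord_smul (-1) v δ hδ
  simpa using this

lemma coord_sub (u v : V) : ∀ δ ∈ P.Δ, P.coord (u - v) δ = P.coord u δ - P.coord v δ := by
  intro δ hδ
  rw [sub_eq_add_neg, P.coord_add u (-v) δ hδ, P.coord_neg v δ hδ]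
  ring

lemma coord_zero : ∀ δ ∈ P.Δ, P.coord 0 δ = 0 := by
  intro δ hδ
  refine P.coord_eq (c := fun _ => 0) ?_ δ hδ
  simp

lemma coord_simple [DecidableEq V] {δ' : V} (hδ' : δ' ∈ P.Δ) :
    ∀ δ ∈ P.Δ, P.coord δ' δ = if δ' = δ then 1 else 0 := by
  intro δ hδ
  refine P.coord_eq (c := fun δ => if δ' = δ then 1 else 0) ?_ δ hδ
  have : ∀ x ∈ P.Δ, (if δ' = x then (1:ℚ) else 0) • x = if δ' = x then x else 0 := by
    intro x _; by_cases h : δ' = x <;> simp [h]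
  rw [Finset.sum_congr rfl this, Finset.sum_ite_eq P.Δ δ' (fun x => x)]
  simp [hδ']

/-- expansion of the form in coordinates (second argument) -/
lemma B_expand (v w : V) : P.B v w = ∑ δ ∈ P.Δ, P.coord w δ * P.B v δ := by
  conv_lhs => rw [P.coord_spec w]
  rw [map_sum]
  exact Finset.sum_congr rfl (fun δ _ => by simp

)

lemma refl_apply {β : V} (hβ : P.B β β ≠ 0) (v : V) :
    P.refl β v = v - (2 * P.B β v / P.B β β) • β := by
  rw [RootSystemBase.refl, dif_pos hβ, Module.reflection_apply]
  congr 1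
  simp only [LinearMap.smul_apply, smul_eq_mul, smul_smul]
  congr 1
  field_simp

lemma refl_refl (β v : V) : P.refl β (P.refl β v) = v := by
  rw [RootSystemBase.refl]
  split_ifs with h
  · exact Module.involutive_reflection _ v
  · rfl

lemma refl_self {β : V} (hβ : P.B β β ≠ 0) : P.refl β β = -β := by
  rw [P.refl_apply hβ]
  rw [show 2 * P.B β β / P.B β β = 2 by field_simp]
  rw [two_smul]; abel

lemma refl_mem_weyl {β : V} (hβ : β ∈ P.Φ) : P.refl β ∈ P.weylGroup :=
  Subgroup.subset_closure ⟨β, hβ, rfl⟩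

lemma refl_root_mem {β γ : V} (hβ : β ∈ P.Φ) (hγ : γ ∈ P.Φ) : P.refl β γ ∈ P.Φ := by
  rw [P.refl_apply (P.B_root_pos hβ).ne']
  exact P.reflect_mem β hβ γ hγ

lemma refl_isometry (β : V) (u v : V) : P.B (P.refl β u) (P.refl β v) = P.B u v := by
  rw [RootSystemBase.refl]
  split_ifs with h
  · rw [show (Module.reflection _ : V ≃ₗ[ℚ] V) u = u - (2 * P.B β u / P.B β β) • β from by
      rw [Module.reflection_apply]; congr 1
      simp only [LinearMap.smul_apply, smul_eq_mul, smul_smul]; congr 1; field_simp]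
    rw [show (Module.reflection _ : V ≃ₗ[ℚ] V) v = v - (2 * P.B β v / P.B β β) • β from by
      rw [Module.reflection_apply]; congr 1
      simp only [LinearMap.smul_apply, smul_eq_mul, smul_smul]; congr 1; field_simp]
    simp only [map_sub, map_smul, LinearMap.sub_apply, LinearMap.smul_apply, smul_eq_mul]
    rw [P.B_symm u β, P.B_symm β v]
    field_simp
    ring
  · rfl

lemma weyl_isometry {w : V ≃ₗ[ℚ] V} (hw : w ∈ P.weylGroup) :
    ∀ u v : V, P.B (w u) (w v) = P.B u v := by
  induction hw using Subgroup.closure_induction with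
  | mem x hx => intro u v; obtain ⟨β, hβ, rfl⟩ := hx; exact P.refl_isometry β u v
  | one => intro u v; rfl
  | mul x y hx hy ihx ihy =>
      intro u v
      rw [show (x * y) u = x (y u) from rfl, show (x * y) v = x (y v) from rfl, ihx, ihy]
  | inv x hx ih =>
      intro u v
      have := ih (x⁻¹ u) (x⁻¹ v)
      rw [show x (x⁻¹ u) = u from x.apply_symm_apply u,
        show x (x⁻¹ v) = v from x.apply_symm_apply v] at this
      exact this.symm

lemma weyl_root_mem {w : V ≃ₗ[ℚ] V} (hw : w ∈ P.weylGroup) :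
    ∀ β ∈ P.Φ, w β ∈ P.Φ := by
  classical
  induction hw using Subgroup.closure_induction with
  | mem x hx => intro β hβ; obtain ⟨γ, hγ, rfl⟩ := hx; exact P.refl_root_mem hγ hβ
  | one => intro β hβ; exact hβ
  | mul x y hx hy ihx ihy =>
      intro β hβ
      rw [show (x * y) β = x (y β) from rfl]
      exact ihx _ (ihy _ hβ)
  | inv x hx ih =>
      intro β hβ
      have himg : P.Φ.image x = P.Φ := by
        apply Finset.eq_of_subset_of_card_le
        · intro γ hγ
          obtain ⟨γ', hγ', rfl⟩ := Finset.mem_image.mp hγ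
          exact ih γ' hγ'
        · rw [Finset.card_image_of_injective _ x.injective]
      rw [← himg] at hβ
      obtain ⟨γ', hγ', hx⟩ := Finset.mem_image.mp hβ
      rw [← hx, show x⁻¹ (x γ') = γ' from x.symm_apply_apply γ']
      exact hγ'

lemma mem_posRoots {β : V} :
    β ∈ P.posRoots ↔ β ∈ P.Φ ∧ ∀ δ ∈ P.Δ, 0 ≤ P.coord β δ := Finset.mem_filter

lemma posRoots_subset : P.posRoots ⊆ P.Φ := Finset.filter_subset _ _

lemma simple_mem_posRoots {δ : V} (hδ : δ ∈ P.Δ) : δ ∈ P.posRoots := by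
  classical
  rw [P.mem_posRoots]
  refine ⟨P.Δ_sub hδ, fun δ' hδ' => ?_⟩
  rw [P.coord_simple hδ δ' hδ']
  split_ifs <;> norm_num

lemma pos_or_neg_mem {β : V} (hβ : β ∈ P.Φ) : β ∈ P.posRoots ∨ -β ∈ P.posRoots := by
  rcases P.pos_or_neg β hβ with h | h
  · exact Or.inl (P.mem_posRoots.mpr ⟨hβ, h⟩)
  · refine Or.inr (P.mem_posRoots.mpr ⟨P.neg_mem hβ, fun δ hδ => ?_⟩)
    rw [P.coord_neg β δ hδ]
    linarith [h δ hδ]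

lemma exists_coord_pos {β : V} (hβ : β ∈ P.posRoots) : ∃ δ ∈ P.Δ, 0 < P.coord β δ := by
  by_contra hc
  push_neg at hc
  have hm := P.mem_posRoots.mp hβ
  have h0 : ∀ δ ∈ P.Δ, P.coord β δ = 0 := fun δ hδ => le_antisymm (hc δ hδ) (hm.2 δ hδ)
  have hβ0 : β = 0 := (P.coord_spec β).trans
    (Finset.sum_eq_zero fun δ hδ => by rw [h0 δ hδ, zero_smul])
  exact P.root_ne_zero (P.posRoots_subset hβ) hβ0

/-- integers: positive rationals that are integers are `≥ 1` -/
lemma int_pos_ge_one {q : ℚ} (hint : ∃ n : ℤ, q = (n : ℚ)) (hq : 0 < q) : 1 ≤ q := by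
  obtain ⟨n, rfl⟩ := hint
  have : 0 < n := by exact_mod_cast hq
  exact_mod_cast this

lemma sub_mem {β γ : V} (hβ : β ∈ P.Φ) (hγ : γ ∈ P.Φ) (hpos : 0 < P.B β γ)
    (hne : β ≠ γ) : β - γ ∈ P.Φ := by
  have hBγ : 0 < P.B γ γ := P.B_root_pos hγ
  have hBβ : 0 < P.B β β := P.B_root_pos hβ
  have hγβ : P.B γ β = P.B β γ := P.B_symm γ β
  by_cases hprop : ∃ c : ℚ, β = c • γ
  · obtain ⟨c, rfl⟩ := hprop
    rcases P.reduced γ hγ c hβ with rfl | rfl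
    · exact absurd (one_smul ℚ γ) hne
    · exfalso
      have : P.B ((-1 : ℚ) • γ) γ = -P.B γ γ := by simp
      rw [this] at hpos; linarith
  · push_neg at hprop
    have hcs : (P.B γ β) ^ 2 < P.B γ γ * P.B β β :=
      P.cs_strict (P.root_ne_zero hγ) hprop
    obtain ⟨n, hn⟩ := P.integral γ hγ β hβ
    obtain ⟨m, hm⟩ := P.integral β hβ γ hγ
    have hn1 : 1 ≤ (n : ℚ) := int_pos_ge_one ⟨n, rfl⟩ (by rw [← hn, hγβ]; exact div_pos (by linarith) hBγ)
    have hm1 : 1 ≤ (m : ℚ) := int_pos_ge_one ⟨m, rfl⟩ (by rw [← hm]; positivity)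
    have hnm : (n : ℚ) * m < 4 := by
      have h1 : (n : ℚ) * m = 4 * (P.B γ β)^2 / (P.B γ γ * P.B β β) := by
        rw [← hn, ← hm, hγβ]
        field_simp
        ring
      rw [h1]
      rw [div_lt_iff₀ (by positivity)]
      nlinarith [hcs]
    have : (n : ℚ) = 1 ∨ (m : ℚ) = 1 := by
      by_contra hc
      push_neg at hc
      have hn2 : 2 ≤ (n : ℚ) := by
        have : (1 : ℤ) < n := by
          have : (1:ℚ) < n := lt_of_le_of_ne hn1 (Ne.symm hc.1)
          exact_mod_cast this
        exact_mod_cast this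
      have hm2 : 2 ≤ (m : ℚ) := by
        have : (1 : ℤ) < m := by
          have : (1:ℚ) < m := lt_of_le_of_ne hm1 (Ne.symm hc.2)
          exact_mod_cast this
        exact_mod_cast this
      nlinarith
    rcases this with h1 | h1
    · have := P.reflect_mem γ hγ β hβ
      rw [hn, h1, one_smul] at this
      exact this
    · have := P.reflect_mem β hβ γ hγ
      rw [hm, h1, one_smul] at this
      have := P.neg_mem this
      rw [neg_sub] at this
      exact this

lemma add_mem {β γ : V} (hβ : β ∈ P.Φ) (hγ : γ ∈ P.Φ) (hneg : P.B β γ < 0)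
    (hne : β ≠ -γ) : β + γ ∈ P.Φ := by
  have h1 : 0 < P.B β (-γ) := by simp; linarith
  have := P.sub_mem hβ (P.neg_mem hγ) h1 hne
  rwa [sub_neg_eq_add] at this

/-- distinct simple roots pair nonpositively -/
lemma simple_pair_nonpos {δ δ' : V} (hδ : δ ∈ P.Δ) (hδ' : δ' ∈ P.Δ) (hne : δ ≠ δ') :
    P.B δ δ' ≤ 0 := by
  classical
  by_contra hc
  push_neg at hc
  have hsub := P.sub_mem (P.Δ_sub hδ) (P.Δ_sub hδ') hc hne
  have h1 : P.coord (δ - δ') δ = 1 := by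
    rw [P.coord_sub δ δ' δ hδ, P.coord_simple hδ δ hδ, P.coord_simple hδ' δ hδ]
    simp [hne.symm]
  have h2 : P.coord (δ - δ') δ' = -1 := by
    rw [P.coord_sub δ δ' δ' hδ', P.coord_simple hδ δ' hδ', P.coord_simple hδ' δ' hδ']
    simp [hne]
  rcases P.pos_or_neg _ hsub with h | h
  · linarith [h δ' hδ']
  · linarith [h δ hδ]

noncomputable def height (β : V) : ℚ := ∑ δ ∈ P.Δ, P.coord β δ

lemma height_pos {β : V} (hβ : β ∈ P.posRoots) : 0 < P.height β := by
  obtain ⟨δ, hδ, hpos⟩ := P.exists_coord_pos hβ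
  exact Finset.sum_pos' (fun δ' hδ' => (P.mem_posRoots.mp hβ).2 δ' hδ') ⟨δ, hδ, hpos⟩

lemma exists_B_pos_of_pos {β : V} (hβ : β ∈ P.posRoots) : ∃ δ ∈ P.Δ, 0 < P.B β δ := by
  by_contra hc; push_neg at hc
  have hexp := P.B_expand β β
  have hterm : ∀ δ ∈ P.Δ, P.coord β δ * P.B β δ ≤ 0 := fun δ hδ =>
    mul_nonpos_iff.mpr (Or.inl ⟨(P.mem_posRoots.mp hβ).2 δ hδ, hc δ hδ⟩)
  have hsum : ∑ δ ∈ P.Δ, P.coord β δ * P.B β δ ≤ 0 := Finset.sum_nonpos hterm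
  rw [← hexp] at hsum
  linarith [P.B_root_pos (P.posRoots_subset hβ)]

lemma posRoot_eq_simple {β δ : V} (hβ : β ∈ P.posRoots) (hδ : δ ∈ P.Δ)
    (hsupp : ∀ δ' ∈ P.Δ, δ' ≠ δ → P.coord β δ' = 0) : β = δ := by
  have hcollapse : β = P.coord β δ • δ := by
    conv_lhs => rw [P.coord_spec β]
    exact Finset.sum_eq_single_of_mem δ hδ
      (fun δ' h hne => by rw [hsupp δ' h hne, zero_smul])
  have hroot : P.coord β δ • δ ∈ P.Φ := hcollapse ▸ P.posRoots_subset hβ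
  rcases P.reduced δ (P.Δ_sub hδ) _ hroot with h1 | h1
  · rw [hcollapse, h1, one_smul]
  · exfalso
    have := (P.mem_posRoots.mp hβ).2 δ hδ
    rw [h1] at this; norm_num at this

lemma refl_coord [DecidableEq V] {δ : V} (hδ : δ ∈ P.Δ) (β : V) :
    ∀ δ' ∈ P.Δ, P.coord (P.refl δ β) δ'
      = P.coord β δ' - (2 * P.B δ β / P.B δ δ) * (if δ = δ' then 1 else 0) := by
  intro δ' hδ'
  have hBδ := (P.B_root_pos (P.Δ_sub hδ)).ne'
  rw [P.refl_apply hBδ, P.coord_sub _ _ δ' hδ', P.coord_smul _ _ δ' hδ',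
    P.coord_simple hδ δ' hδ']

lemma refl_simple_pos {δ β : V} (hδ : δ ∈ P.Δ) (hβ : β ∈ P.posRoots) (hne : β ≠ δ) :
    P.refl δ β ∈ P.posRoots := by
  classical
  have hroot : P.refl δ β ∈ P.Φ := P.refl_root_mem (P.Δ_sub hδ) (P.posRoots_subset hβ)
  have hsupp : ∃ δ' ∈ P.Δ, δ' ≠ δ ∧ 0 < P.coord β δ' := by
    by_contra hc; push_neg at hc
    refine hne (P.posRoot_eq_simple hβ hδ (fun δ' hδ' hne' => ?_))
    exact le_antisymm (hc δ' hδ' hne') ((P.mem_posRoots.mp hβ).2 δ' hδ')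
  obtain ⟨δ', hδ', hne', hpos⟩ := hsupp
  have hcoord : P.coord (P.refl δ β) δ' = P.coord β δ' := by
    rw [P.refl_coord hδ β δ' hδ']
    simp [Ne.symm hne']
  rcases P.pos_or_neg _ hroot with h | h
  · exact P.mem_posRoots.mpr ⟨hroot, h⟩
  · exfalso
    have := h δ' hδ'
    rw [hcoord] at this; linarith

lemma refl_height [DecidableEq V] {δ : V} (hδ : δ ∈ P.Δ) (β : V) :
    P.height (P.refl δ β) = P.height β - 2 * P.B δ β / P.B δ δ := by
  unfold height
  rw [Finset.sum_congr rfl (fun δ' hδ' => P.refl_coord hδ β δ' hδ'), Finset.sum_sub_distrib]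
  congr 1
  rw [← Finset.mul_sum]
  have : ∀ δ' ∈ P.Δ, (if δ = δ' then (1:ℚ) else 0) = if δ' = δ then 1 else 0 :=
    fun δ' _ => by by_cases h : δ = δ' <;> simp [h, eq_comm]
  rw [Finset.sum_congr rfl this, Finset.sum_ite_eq' P.Δ δ (fun _ => (1:ℚ))]
  simp [hδ]

lemma coroot_neg (v : V) : P.coroot (-v) = - P.coroot v := by
  unfold coroot
  simp

lemma coroot_smul_self (v : V) : P.coroot v = (2 / P.B v v) • v := rfl

lemma weyl_coroot {w : V ≃ₗ[ℚ] V} (hw : w ∈ P.weylGroup) (v : V) :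
    w (P.coroot v) = P.coroot (w v) := by
  unfold coroot
  rw [P.weyl_isometry hw v v, map_smul]

lemma corootMult_simple [DecidableEq V] {δ' δ : V} (hδ' : δ' ∈ P.Δ) (hδ : δ ∈ P.Δ) :
    P.corootMult δ' δ = if δ' = δ then 1 else 0 := by
  unfold corootMult coroot
  rw [P.coord_smul _ _ δ hδ, P.coord_simple hδ' δ hδ]
  by_cases h : δ' = δ
  · subst h
    have hne := (P.B_root_pos (P.Δ_sub hδ')).ne'
    field_simp
  · simp only [if_neg h]
    ring

lemma corootMult_refl [DecidableEq V] {δ : V} (hδ : δ ∈ P.Δ) {β : V} (hβ : β ∈ P.Φ) :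
    ∀ δ'' ∈ P.Δ, P.corootMult (P.refl δ β) δ''
      = P.corootMult β δ'' - (2 * P.B β δ / P.B β β) * (if δ = δ'' then 1 else 0) := by
  intro δ'' hδ''
  have hBβ := (P.B_root_pos hβ).ne'
  have hBδ := (P.B_root_pos (P.Δ_sub hδ)).ne'
  have hcor : P.coroot (P.refl δ β) = P.refl δ (P.coroot β) := by
    unfold coroot
    rw [P.refl_isometry δ β β, map_smul]
  unfold corootMult
  rw [hcor, P.refl_coord hδ (P.coroot β) δ'' hδ'']
  have hBδcor : P.B δ (P.coroot β) = 2 * P.B β δ / P.B β β := by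
    unfold coroot
    rw [map_smul, smul_eq_mul, P.B_symm δ β]
    ring
  by_cases h : δ = δ''
  · subst h
    rw [hBδcor]
    field_simp
  · simp only [if_neg h]
    ring

lemma corootMult_int_posAux : ∀ n : ℕ, ∀ β ∈ P.posRoots, P.height β ≤ n →
    ∀ δ ∈ P.Δ, ∃ k : ℤ, P.corootMult β δ = k := by
  classical
  intro n
  induction n with
  | zero =>
    intro β hβ hh
    exfalso
    have := P.height_pos hβ
    rw [Nat.cast_zero] at hh
    linarith
  | succ n ih =>
    intro β hβ hh δ hδ
    by_cases hsimple : β ∈ P.Δ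
    · exact ⟨if β = δ then 1 else 0, by
        rw [P.corootMult_simple hsimple hδ]; split_ifs <;> norm_num⟩
    · obtain ⟨δ', hδ', hBpos⟩ := P.exists_B_pos_of_pos hβ
      have hβδ' : β ≠ δ' := fun h => hsimple (h ▸ hδ')
      set γ := P.refl δ' β with hγdef
      have hγpos : γ ∈ P.posRoots := P.refl_simple_pos hδ' hβ hβδ'
      have hβγ : β = P.refl δ' γ := (P.refl_refl δ' β).symm
      have hBδ' := P.B_root_pos (P.Δ_sub hδ')
      have hk1 : 1 ≤ 2 * P.B δ' β / P.B δ' δ' := by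
        refine int_pos_ge_one (P.integral δ' (P.Δ_sub hδ') β (P.posRoots_subset hβ)) ?_
        exact div_pos (by linarith [P.B_symm δ' β]) hBδ'
      have hhγ : P.height γ ≤ n := by
        rw [hγdef, P.refl_height hδ' β]
        push_cast at hh ⊢
        linarith
      obtain ⟨k, hk⟩ := ih γ hγpos hhγ δ hδ
      have hγroot : γ ∈ P.Φ := P.posRoots_subset hγpos
      obtain ⟨c, hc⟩ := P.integral γ hγroot δ' (P.Δ_sub hδ')
      rw [hβγ, P.corootMult_refl hδ' hγroot δ hδ, hk, hc]
      exact ⟨k - c * (if δ' = δ then 1 else 0), by split_ifs <;> push_cast <;> ring⟩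

lemma height_int {β : V} (hβ : β ∈ P.Φ) : ∃ n : ℤ, P.height β = (n : ℚ) := by
  have hmem : P.height β ∈ (Int.castRingHom ℚ).range := by
    apply Subring.sum_mem
    intro δ hδ
    obtain ⟨n, hn⟩ := P.coord_int β hβ δ hδ
    exact ⟨n, hn.symm⟩
  obtain ⟨n, hn⟩ := hmem
  exact ⟨n, hn.symm⟩

lemma corootMult_neg (β : V) {δ : V} (hδ : δ ∈ P.Δ) :
    P.corootMult (-β) δ = - P.corootMult β δ := by
  unfold corootMult
  rw [P.coroot_neg, P.coord_neg _ δ hδ]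
  ring

lemma corootMult_int {β : V} (hβ : β ∈ P.Φ) {δ : V} (hδ : δ ∈ P.Δ) :
    ∃ k : ℤ, P.corootMult β δ = k := by
  have hpos : ∀ γ ∈ P.posRoots, ∃ k : ℤ, P.corootMult γ δ = k := by
    intro γ hγ
    obtain ⟨n, hn⟩ := P.height_int (P.posRoots_subset hγ)
    refine P.corootMult_int_posAux n.toNat γ hγ ?_ δ hδ
    rw [hn]
    exact_mod_cast Int.self_le_toNat n
  rcases P.pos_or_neg_mem hβ with h | h
  · exact hpos β h
  · obtain ⟨k, hk⟩ := hpos (-β) h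
    refine ⟨-k, ?_⟩
    rw [P.corootMult_neg β hδ] at hk
    push_cast
    linarith

lemma root_pos_of_coord_pos {β δ : V} (hβ : β ∈ P.Φ) (hδ : δ ∈ P.Δ)
    (h : 0 < P.coord β δ) : β ∈ P.posRoots := by
  rcases P.pos_or_neg_mem hβ with h1 | h1
  · exact h1
  · exfalso
    have := (P.mem_posRoots.mp h1).2 δ hδ
    rw [P.coord_neg β δ hδ] at this
    linarith

lemma sum_ne_zero_of_coord {S : Finset V} (hS : S ⊆ P.Δ) (c : V → ℚ) {δ₀ : V}
    (hδ₀ : δ₀ ∈ S) (hc : c δ₀ ≠ 0) : ∑ δ ∈ S, c δ • δ ≠ 0 := by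
  classical
  intro h0
  set c' : V → ℚ := fun δ => if δ ∈ S then c δ else 0 with hc'
  have hext : ∑ δ ∈ P.Δ, c' δ • δ = ∑ δ ∈ S, c δ • δ := by
    rw [← Finset.sum_subset hS (fun δ _ hδ => by simp [hc', hδ])]
    exact Finset.sum_congr rfl (fun δ hδ => by simp [hc', hδ])
  have := P.coord_unique (c := c') (by rw [hext, h0]) δ₀ (hS hδ₀)
  simp [hc', hδ₀] at this
  exact hc this

lemma B_sum_sum (s t : Finset V) (c d : V → ℚ) :
    P.B (∑ δ ∈ s, c δ • δ) (∑ δ' ∈ t, d δ' • δ')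
      = ∑ δ ∈ s, ∑ δ' ∈ t, c δ * (d δ' * P.B δ δ') := by
  rw [map_sum]
  rw [show (∑ δ ∈ s, ∑ δ' ∈ t, c δ * (d δ' * P.B δ δ'))
      = ∑ δ' ∈ t, ∑ δ ∈ s, c δ * (d δ' * P.B δ δ') from Finset.sum_comm]
  refine Finset.sum_congr rfl (fun δ' hδ' => ?_)
  rw [map_smul, smul_eq_mul, map_sum, LinearMap.sum_apply, Finset.mul_sum]
  refine Finset.sum_congr rfl (fun δ hδ => ?_)
  rw [map_smul, LinearMap.smul_apply, smul_eq_mul]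
  ring

/-- no mixed roots when the base splits orthogonally -/
lemma no_mixed_root [DecidableEq V] {S : Finset V} (hS : S ⊆ P.Δ)
    (horth : ∀ δ ∈ S, ∀ δ' ∈ P.Δ \ S, P.B δ δ' = 0) :
    ∀ n : ℕ, ∀ β ∈ P.posRoots, (∑ δ ∈ S, P.coord β δ) ≤ n →
    (∃ δ ∈ S, 0 < P.coord β δ) → (∃ δ' ∈ P.Δ \ S, 0 < P.coord β δ') → False := by
  classical
  intro n
  induction n with
  | zero =>
    intro β hβ hh hmS hmT
    obtain ⟨δ, hδ, hpos⟩ := hmS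
    have : 0 < ∑ δ ∈ S, P.coord β δ :=
      Finset.sum_pos' (fun δ' hδ' => (P.mem_posRoots.mp hβ).2 δ' (hS hδ')) ⟨δ, hδ, hpos⟩
    rw [Nat.cast_zero] at hh
    linarith
  | succ n ih =>
    intro β hβ hh hmS hmT
    obtain ⟨δw, hδw, hδwpos⟩ := hmS
    obtain ⟨δt, hδt, hδtpos⟩ := hmT
    have hδtΔ : δt ∈ P.Δ := (Finset.mem_sdiff.mp hδt).1
    have hβΦ : β ∈ P.Φ := P.posRoots_subset hβ
    -- the `S`-part of β pairs positively with β
    set u : V := ∑ δ ∈ S, P.coord β δ • δ with hu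
    have hune : u ≠ 0 := P.sum_ne_zero_of_coord hS _ hδw (ne_of_gt hδwpos)
    have hβu : P.B β u = P.B u u := by
      have hsplit : β = (∑ δ ∈ P.Δ \ S, P.coord β δ • δ) + u := by
        rw [hu, Finset.sum_sdiff hS]
        exact P.coord_spec β
      conv_lhs => rw [hsplit]
      rw [map_add, LinearMap.add_apply]
      have hzero : P.B (∑ δ ∈ P.Δ \ S, P.coord β δ • δ) u = 0 := by
        rw [hu, P.B_sum_sum]
        refine Finset.sum_eq_zero (fun δ' hδ' => Finset.sum_eq_zero (fun δ hδ => ?_))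
        rw [P.B_symm δ' δ, horth δ hδ δ' hδ']
        ring
      rw [hzero, zero_add]
    have hupos : 0 < P.B u u := P.B_posdef u hune
    have hsum : 0 < ∑ δ ∈ S, P.coord β δ * P.B β δ := by
      have : P.B β u = ∑ δ ∈ S, P.coord β δ * P.B β δ := by
        rw [hu, map_sum]
        exact Finset.sum_congr rfl (fun δ _ => by rw [map_smul, smul_eq_mul])
      rw [← this, hβu]; exact hupos
    obtain ⟨δ, hδS, hcpos, hBpos⟩ : ∃ δ ∈ S, 0 < P.coord β δ ∧ 0 < P.B β δ := by
      by_contra hc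
      have hterm : ∀ δ ∈ S, P.coord β δ * P.B β δ ≤ 0 := by
        intro δ hδ
        have hcoord := (P.mem_posRoots.mp hβ).2 δ (hS hδ)
        rcases le_or_gt (P.B β δ) 0 with hB | hB
        · exact mul_nonpos_iff.mpr (Or.inl ⟨hcoord, hB⟩)
        · rcases eq_or_lt_of_le hcoord with h0 | h0
          · rw [← h0, zero_mul]
          · exact absurd ⟨δ, hδ, h0, hB⟩ hc
      linarith [Finset.sum_nonpos hterm]
    have hδΔ : δ ∈ P.Δ := hS hδS
    have hβδ : β ≠ δ := by
      intro heq
      rw [heq, P.coord_simple hδΔ δt hδtΔ] at hδtpos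
      have hne2 : δ ≠ δt := fun h => (Finset.mem_sdiff.mp hδt).2 (h ▸ hδS)
      rw [if_neg hne2] at hδtpos
      norm_num at hδtpos
    have hγ : β - δ ∈ P.Φ := P.sub_mem hβΦ (P.Δ_sub hδΔ) hBpos hβδ
    have hδδt : δ ≠ δt := fun h => (Finset.mem_sdiff.mp hδt).2 (h ▸ hδS)
    have hγt : P.coord (β - δ) δt = P.coord β δt := by
      rw [P.coord_sub β δ δt hδtΔ, P.coord_simple hδΔ δt hδtΔ, if_neg hδδt, sub_zero]
    have hγpos : β - δ ∈ P.posRoots := by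
      refine P.root_pos_of_coord_pos hγ hδtΔ ?_
      rw [hγt]; exact hδtpos
    have hγheight : (∑ δ' ∈ S, P.coord (β - δ) δ') = (∑ δ' ∈ S, P.coord β δ') - 1 := by
      rw [Finset.sum_congr rfl (fun δ' hδ' => P.coord_sub β δ δ' (hS hδ'))]
      rw [Finset.sum_sub_distrib]
      congr 1
      rw [Finset.sum_congr rfl (fun δ' hδ' => P.coord_simple hδΔ δ' (hS hδ'))]
      have hflip : ∀ δ' ∈ S, (if δ = δ' then (1:ℚ) else 0) = if δ' = δ then 1 else 0 :=
        fun δ' _ => by by_cases h : δ = δ' <;> simp [h, eq_comm]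
      rw [Finset.sum_congr rfl hflip, Finset.sum_ite_eq' S δ (fun _ => (1:ℚ))]
      simp [hδS]
    by_cases hmix : ∃ δ' ∈ S, 0 < P.coord (β - δ) δ'
    · refine ih (β - δ) hγpos ?_ hmix ⟨δt, hδt, by rwa [hγt]⟩
      rw [hγheight]
      push_cast at hh ⊢
      linarith
    · -- the `S`-part of `β - δ` vanishes, so `β = δ + γ` with `γ` supported on `T`
      push_neg at hmix
      have hzero : ∀ δ' ∈ S, P.coord (β - δ) δ' = 0 := fun δ' hδ' =>
        le_antisymm (hmix δ' hδ') ((P.mem_posRoots.mp hγpos).2 δ' (hS hδ'))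
      have hBδγ : P.B δ (β - δ) = 0 := by
        rw [P.B_expand δ (β - δ)]
        refine Finset.sum_eq_zero (fun δ' hδ' => ?_)
        by_cases hδ'S : δ' ∈ S
        · rw [hzero δ' hδ'S, zero_mul]
        · rw [horth δ hδS δ' (Finset.mem_sdiff.mpr ⟨hδ', hδ'S⟩), mul_zero]
      have hpair : 2 * P.B δ β / P.B δ δ = 2 := by
        have h1 : P.B δ β = P.B δ δ := by
          have := hBδγ
          rw [map_sub] at this
          linarith
        rw [h1, mul_div_assoc, div_self (P.B_root_pos (P.Δ_sub hδΔ)).ne', mul_one]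
      have hrefl : P.refl δ β ∈ P.Φ := P.refl_root_mem (P.Δ_sub hδΔ) hβΦ
      have hreflval : P.refl δ β = β - (2:ℚ) • δ := by
        rw [P.refl_apply (P.B_root_pos (P.Δ_sub hδΔ)).ne', hpair]
      have hc1 : P.coord (P.refl δ β) δ = P.coord β δ - 2 := by
        rw [hreflval, P.coord_sub β _ δ hδΔ, P.coord_smul 2 δ δ hδΔ,
          P.coord_simple hδΔ δ hδΔ]
        simp
      have hc2 : P.coord (P.refl δ β) δt = P.coord β δt := by
        rw [hreflval, P.coord_sub β _ δt hδtΔ, P.coord_smul 2 δ δt hδtΔ,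
          P.coord_simple hδΔ δt hδtΔ, if_neg hδδt]
        ring
      have hcoordδ : P.coord β δ = 1 := by
        have h2 := hzero δ hδS
        rw [P.coord_sub β δ δ hδΔ, P.coord_simple hδΔ δ hδΔ, if_pos rfl] at h2
        linarith
      rcases P.pos_or_neg _ hrefl with h | h
      · have := h δ hδΔ
        rw [hc1, hcoordδ] at this
        linarith
      · have := h δt hδtΔ
        rw [hc2] at this
        linarith

/-- the base cannot split into two orthogonal parts -/
lemma no_orthogonal_split [DecidableEq V] {S : Finset V} (hS : S ⊆ P.Δ) (hne : S.Nonempty)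
    (hne' : (P.Δ \ S).Nonempty)
    (horth : ∀ δ ∈ S, ∀ δ' ∈ P.Δ \ S, P.B δ δ' = 0) : False := by
  classical
  set s : Finset V := P.Φ.filter (fun β => ∀ δ' ∈ P.Δ \ S, P.coord β δ' = 0) with hs
  obtain ⟨δ₀, hδ₀⟩ := hne
  obtain ⟨δ₁, hδ₁⟩ := hne'
  have hδ₁Δ : δ₁ ∈ P.Δ := (Finset.mem_sdiff.mp hδ₁).1
  have hmem : ∀ {β : V}, β ∈ s ↔ β ∈ P.Φ ∧ ∀ δ' ∈ P.Δ \ S, P.coord β δ' = 0 :=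
    fun {β} => Finset.mem_filter
  have hnomix : ∀ γ ∈ P.Φ, (∃ δ' ∈ P.Δ \ S, P.coord γ δ' ≠ 0) →
      ∀ δ ∈ S, P.coord γ δ = 0 := by
    intro γ hγ ⟨δ', hδ', hval⟩ δ hδ
    by_contra hval2
    -- use the positive version of γ
    rcases P.pos_or_neg_mem hγ with h | h
    · have h1 : 0 < P.coord γ δ' :=
        lt_of_le_of_ne ((P.mem_posRoots.mp h).2 δ' (Finset.mem_sdiff.mp hδ').1) (Ne.symm hval)
      have h2 : 0 < P.coord γ δ :=
        lt_of_le_of_ne ((P.mem_posRoots.mp h).2 δ (hS hδ)) (Ne.symm hval2)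
      obtain ⟨m, hm⟩ := P.height_int hγ
      refine P.no_mixed_root hS horth m.toNat γ h ?_ ⟨δ, hδ, h2⟩ ⟨δ', hδ', h1⟩
      have hle : (∑ δ ∈ S, P.coord γ δ) ≤ P.height γ := by
        rw [RootSystemBase.height, ← Finset.sum_sdiff hS]
        have : 0 ≤ ∑ δ ∈ P.Δ \ S, P.coord γ δ :=
          Finset.sum_nonneg (fun δ'' hδ'' =>
            (P.mem_posRoots.mp h).2 δ'' (Finset.mem_sdiff.mp hδ'').1)
        linarith
      rw [hm] at hle
      calc (∑ δ ∈ S, P.coord γ δ) ≤ (m : ℚ) := hle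
        _ ≤ (m.toNat : ℚ) := by exact_mod_cast Int.self_le_toNat m
    · have hγ' : -γ ∈ P.Φ := P.posRoots_subset h
      have h1 : 0 < P.coord (-γ) δ' := by
        have := (P.mem_posRoots.mp h).2 δ' (Finset.mem_sdiff.mp hδ').1
        rcases eq_or_lt_of_le this with heq | hlt
        · exfalso
          rw [P.coord_neg γ δ' (Finset.mem_sdiff.mp hδ').1] at heq
          exact hval (by linarith)
        · exact hlt
      have h2 : 0 < P.coord (-γ) δ := by
        have := (P.mem_posRoots.mp h).2 δ (hS hδ)
        rcases eq_or_lt_of_le this with heq | hlt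
        · exfalso
          rw [P.coord_neg γ δ (hS hδ)] at heq
          exact hval2 (by linarith)
        · exact hlt
      obtain ⟨m, hm⟩ := P.height_int hγ'
      refine P.no_mixed_root hS horth m.toNat (-γ) h ?_ ⟨δ, hδ, h2⟩ ⟨δ', hδ', h1⟩
      have hle : (∑ δ ∈ S, P.coord (-γ) δ) ≤ P.height (-γ) := by
        rw [RootSystemBase.height, ← Finset.sum_sdiff hS]
        have : 0 ≤ ∑ δ ∈ P.Δ \ S, P.coord (-γ) δ :=
          Finset.sum_nonneg (fun δ'' hδ'' =>
            (P.mem_posRoots.mp h).2 δ'' (Finset.mem_sdiff.mp hδ'').1)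
        linarith
      rw [hm] at hle
      calc (∑ δ ∈ S, P.coord (-γ) δ) ≤ (m : ℚ) := hle
        _ ≤ (m.toNat : ℚ) := by exact_mod_cast Int.self_le_toNat m
  have hirr := P.irreducible s (Finset.filter_subset _ _) ?_ ?_
  · -- but δ₁ ∉ s
    have hδ₁s : δ₁ ∈ s := hirr ▸ P.Δ_sub hδ₁Δ
    have := (hmem.mp hδ₁s).2 δ₁ hδ₁
    rw [P.coord_simple hδ₁Δ δ₁ hδ₁Δ, if_pos rfl] at this
    norm_num at this
  · -- nonempty
    refine ⟨δ₀, hmem.mpr ⟨P.Δ_sub (hS hδ₀), fun δ' hδ' => ?_⟩⟩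
    rw [P.coord_simple (hS hδ₀) δ' (Finset.mem_sdiff.mp hδ').1]
    have : δ₀ ≠ δ' := fun h => (Finset.mem_sdiff.mp hδ').2 (h ▸ hδ₀)
    simp [this]
  · -- orthogonality hypothesis
    intro β hβ γ hγ hγs
    have hβs := hmem.mp hβ
    have hγT : ∃ δ' ∈ P.Δ \ S, P.coord γ δ' ≠ 0 := by
      by_contra hc
      push_neg at hc
      exact hγs (hmem.mpr ⟨hγ, hc⟩)
    have hγS : ∀ δ ∈ S, P.coord γ δ = 0 := hnomix γ hγ hγT
    rw [P.B_expand β γ]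
    refine Finset.sum_eq_zero (fun δ' hδ' => ?_)
    by_cases hδ'S : δ' ∈ S
    · rw [hγS δ' hδ'S, zero_mul]
    · -- δ' ∈ T; B β δ' = 0 since β supported on S
      have hδ'T : δ' ∈ P.Δ \ S := Finset.mem_sdiff.mpr ⟨hδ', hδ'S⟩
      rw [P.B_symm β δ', P.B_expand δ' β]
      rw [Finset.sum_eq_zero, mul_zero]
      intro δ hδ
      by_cases hδS : δ ∈ S
      · rw [P.B_symm δ' δ, horth δ hδS δ' hδ'T, mul_zero]
      · rw [hβs.2 δ (Finset.mem_sdiff.mpr ⟨hδ, hδS⟩), zero_mul]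

/-- dominance order on coordinates -/
def domLe (β γ : V) : Prop := ∀ δ ∈ P.Δ, P.coord β δ ≤ P.coord γ δ

lemma domLe_refl (β : V) : P.domLe β β := fun _ _ => le_refl _

lemma domLe_antisymm {β γ : V} (h1 : P.domLe β γ) (h2 : P.domLe γ β) : β = γ := by
  rw [P.coord_spec β, P.coord_spec γ]
  exact Finset.sum_congr rfl (fun δ hδ => by
    rw [le_antisymm (h1 δ hδ) (h2 δ hδ)])

lemma domLe_trans {β γ ρ : V} (h1 : P.domLe β γ) (h2 : P.domLe γ ρ) : P.domLe β ρ :=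
  fun δ hδ => le_trans (h1 δ hδ) (h2 δ hδ)

/-- every positive root is dominated by a maximal one -/
lemma exists_maximal : ∀ (n : ℕ) (β : V), β ∈ P.posRoots →
    ((P.posRoots.filter (fun γ => P.domLe β γ ∧ γ ≠ β)).card ≤ n) →
    ∃ h ∈ P.posRoots, P.domLe β h ∧ ∀ γ ∈ P.posRoots, P.domLe h γ → γ = h := by
  classical
  intro n
  induction n with
  | zero =>
    intro β hβ hcard
    refine ⟨β, hβ, P.domLe_refl β, fun γ hγ hle => ?_⟩
    by_contra hne
    have : γ ∈ P.posRoots.filter (fun γ => P.domLe β γ ∧ γ ≠ β) :=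
      Finset.mem_filter.mpr ⟨hγ, hle, hne⟩
    have := Finset.card_pos.mpr ⟨γ, this⟩
    omega
  | succ n ih =>
    intro β hβ hcard
    by_cases hmax : ∀ γ ∈ P.posRoots, P.domLe β γ → γ = β
    · exact ⟨β, hβ, P.domLe_refl β, hmax⟩
    · push_neg at hmax
      obtain ⟨γ, hγ, hle, hne⟩ := hmax
      have hss : P.posRoots.filter (fun ρ => P.domLe γ ρ ∧ ρ ≠ γ) ⊂
          P.posRoots.filter (fun ρ => P.domLe β ρ ∧ ρ ≠ β) := by
        refine ⟨fun ρ hρ => ?_, fun hsub => ?_⟩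
        · obtain ⟨hρp, hρle, hρne⟩ := Finset.mem_filter.mp hρ
          refine Finset.mem_filter.mpr ⟨hρp, P.domLe_trans hle hρle, fun h => ?_⟩
          exact hne (P.domLe_antisymm hle (h ▸ hρle)).symm
        · have hγmem : γ ∈ P.posRoots.filter (fun ρ => P.domLe β ρ ∧ ρ ≠ β) :=
            Finset.mem_filter.mpr ⟨hγ, hle, hne⟩
          have := hsub hγmem
          exact (Finset.mem_filter.mp this).2.2 rfl
      obtain ⟨h, hh, hhle, hhmax⟩ := ih γ hγ (by
        have := Finset.card_lt_card hss
        omega)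
      exact ⟨h, hh, P.domLe_trans hle hhle, hhmax⟩

/-- a maximal positive root is dominant -/
lemma maximal_dominant {h : V} (hh : h ∈ P.posRoots)
    (hmax : ∀ γ ∈ P.posRoots, P.domLe h γ → γ = h) : P.IsDominant h := by
  classical
  intro δ hδ
  by_contra hc
  push_neg at hc
  have hBδh : P.B h δ < 0 := hc
  have hhδ : h ≠ -δ := by
    intro heq
    have h1 := (P.mem_posRoots.mp hh).2 δ hδ
    rw [heq, P.coord_neg δ δ hδ, P.coord_simple hδ δ hδ, if_pos rfl] at h1
    linarith
  have hadd : h + δ ∈ P.Φ := P.add_mem (P.posRoots_subset hh) (P.Δ_sub hδ) hBδh hhδ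
  have hc1 : P.coord (h + δ) δ = P.coord h δ + 1 := by
    rw [P.coord_add h δ δ hδ, P.coord_simple hδ δ hδ, if_pos rfl]
  have haddpos : h + δ ∈ P.posRoots := by
    refine P.root_pos_of_coord_pos hadd hδ ?_
    rw [hc1]
    linarith [(P.mem_posRoots.mp hh).2 δ hδ]
  have hle : P.domLe h (h + δ) := by
    intro δ' hδ'
    rw [P.coord_add h δ δ' hδ', P.coord_simple hδ δ' hδ']
    split_ifs <;> linarith
  have := hmax (h + δ) haddpos hle
  have h2 : P.coord (h+δ) δ = P.coord h δ := by rw [this]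
  rw [hc1] at h2
  linarith

/-- a maximal positive root has full support -/
lemma maximal_full_support {h : V} (hh : h ∈ P.posRoots)
    (hmax : ∀ γ ∈ P.posRoots, P.domLe h γ → γ = h) : ∀ δ ∈ P.Δ, 0 < P.coord h δ := by
  classical
  by_contra hc
  push_neg at hc
  obtain ⟨δ₁, hδ₁, hδ₁le⟩ := hc
  have hδ₁0 : P.coord h δ₁ = 0 := le_antisymm hδ₁le ((P.mem_posRoots.mp hh).2 δ₁ hδ₁)
  set S : Finset V := P.Δ.filter (fun δ => 0 < P.coord h δ) with hSdef
  have hSsub : S ⊆ P.Δ := Finset.filter_subset _ _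
  have hSne : S.Nonempty := by
    obtain ⟨δ, hδ, hpos⟩ := P.exists_coord_pos hh
    exact ⟨δ, Finset.mem_filter.mpr ⟨hδ, hpos⟩⟩
  have hTne : (P.Δ \ S).Nonempty := by
    refine ⟨δ₁, Finset.mem_sdiff.mpr ⟨hδ₁, fun hmem => ?_⟩⟩
    have := (Finset.mem_filter.mp hmem).2
    linarith
  have hdom := P.maximal_dominant hh hmax
  refine P.no_orthogonal_split hSsub hSne hTne (fun δ hδS δ' hδ'T => ?_)
  have hδΔ : δ ∈ P.Δ := hSsub hδS
  have hδ'Δ : δ' ∈ P.Δ := (Finset.mem_sdiff.mp hδ'T).1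
  -- 0 ≤ B h δ' and B δ' h = ∑ nonpositive terms
  have hterm : ∀ δ'' ∈ P.Δ, P.coord h δ'' * P.B δ' δ'' ≤ 0 := by
    intro δ'' hδ''
    by_cases hδ''S : δ'' ∈ S
    · have hne : δ' ≠ δ'' := by
        intro heq
        exact (Finset.mem_sdiff.mp hδ'T).2 (heq ▸ hδ''S)
      have := P.simple_pair_nonpos hδ'Δ hδ'' hne
      have hcpos := (Finset.mem_filter.mp hδ''S).2
      exact mul_nonpos_iff.mpr (Or.inl ⟨le_of_lt hcpos, this⟩)
    · have : P.coord h δ'' = 0 := by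
        have h1 := (P.mem_posRoots.mp hh).2 δ'' hδ''
        by_contra hne
        exact hδ''S (Finset.mem_filter.mpr ⟨hδ'', lt_of_le_of_ne h1 (Ne.symm hne)⟩)
      rw [this, zero_mul]
  have hsumzero : ∑ δ'' ∈ P.Δ, P.coord h δ'' * P.B δ' δ'' = 0 := by
    have h1 : P.B δ' h = ∑ δ'' ∈ P.Δ, P.coord h δ'' * P.B δ' δ'' := P.B_expand δ' h
    have h2 : 0 ≤ P.B h δ' := hdom δ' hδ'Δ
    rw [P.B_symm h δ'] at h2
    have h3 := Finset.sum_nonpos hterm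
    linarith
  -- each term vanishes
  have := (Finset.sum_eq_zero_iff_of_nonpos hterm).mp hsumzero δ hδΔ
  have hcpos := (Finset.mem_filter.mp hδS).2
  have : P.B δ' δ = 0 := by
    rcases mul_eq_zero.mp this with h | h
    · linarith
    · exact h
  rw [P.B_symm δ δ']
  exact this

/-- existence of the highest root -/
lemma exists_highest {δ₀ : V} (hδ₀ : δ₀ ∈ P.Δ) :
    ∃ h, P.IsHighestRoot h ∧ h ∈ P.posRoots ∧ (∀ δ ∈ P.Δ, 0 < P.coord h δ)
      ∧ P.IsDominant h := by
  classical
  obtain ⟨h, hh, _, hmax⟩ := P.exists_maximal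
    ((P.posRoots.filter (fun γ => P.domLe δ₀ γ ∧ γ ≠ δ₀)).card) δ₀
    (P.simple_mem_posRoots hδ₀) (le_refl _)
  have hfull := P.maximal_full_support hh hmax
  have hdom := P.maximal_dominant hh hmax
  refine ⟨h, ⟨P.posRoots_subset hh, fun β hβ δ hδ => ?_⟩, hh, hfull, hdom⟩
  obtain ⟨h', hh', hble, hmax'⟩ := P.exists_maximal
    ((P.posRoots.filter (fun γ => P.domLe β γ ∧ γ ≠ β)).card) β hβ (le_refl _)
  have hfull' := P.maximal_full_support hh' hmax'
  have hdom' := P.maximal_dominant hh' hmax'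
  -- h' = h
  have hBpos : 0 < P.B h' h := by
    rw [P.B_expand h' h]
    obtain ⟨δ₂, hδ₂, hB2⟩ := P.exists_B_pos_of_pos hh'
    refine Finset.sum_pos' (fun δ' hδ' => ?_) ⟨δ₂, hδ₂, ?_⟩
    · exact mul_nonneg (le_of_lt (hfull δ' hδ')) (hdom' δ' hδ')
    · exact mul_pos (hfull δ₂ hδ₂) hB2
  have hh'h : h' = h := by
    by_contra hne
    have hsub := P.sub_mem (P.posRoots_subset hh') (P.posRoots_subset hh) hBpos hne
    rcases P.pos_or_neg_mem hsub with hp | hp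
    · -- h ≼ h', so h' = h by maximality of h
      refine hne (hmax h' hh' (fun δ' hδ' => ?_))
      have := (P.mem_posRoots.mp hp).2 δ' hδ'
      rw [P.coord_sub h' h δ' hδ'] at this
      linarith
    · rw [neg_sub] at hp
      refine hne ((hmax' h hh (fun δ' hδ' => ?_))).symm
      have := (P.mem_posRoots.mp hp).2 δ' hδ'
      rw [P.coord_sub h h' δ' hδ'] at this
      linarith
  exact hh'h ▸ hble δ hδ

/-- every root is non-orthogonal to some Weyl translate of any given root -/
lemma orbit_nonorthogonal {β : V} (hβ : β ∈ P.Φ) :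
    ∀ γ ∈ P.Φ, ∃ w ∈ P.weylGroup, P.B (w β) γ ≠ 0 := by
  classical
  set t : Finset V := P.Φ.filter (fun γ => ∃ w ∈ P.weylGroup, P.B (w β) γ ≠ 0) with ht
  have hteq : t = P.Φ := by
    refine P.irreducible t (Finset.filter_subset _ _) ⟨β, ?_⟩ ?_
    · refine Finset.mem_filter.mpr ⟨hβ, 1, one_mem _, ?_⟩
      show P.B ((1 : V ≃ₗ[ℚ] V) β) β ≠ 0
      exact (P.B_root_pos hβ).ne'
    · intro γ hγt γ' hγ' hγ's
      by_contra hBne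
      apply hγ's
      obtain ⟨hγΦ, w, hw, hBw⟩ := Finset.mem_filter.mp hγt
      by_cases h0 : P.B (w β) γ' = 0
      · refine Finset.mem_filter.mpr ⟨hγ', P.refl γ * w, mul_mem (P.refl_mem_weyl hγΦ) hw, ?_⟩
        have happ : (P.refl γ * w) β = P.refl γ (w β) := rfl
        rw [happ, P.refl_apply (P.B_root_pos hγΦ).ne' (w β), map_sub, LinearMap.sub_apply,
          map_smul, LinearMap.smul_apply, smul_eq_mul, h0, zero_sub, neg_ne_zero]
        have hBγwβ : P.B γ (w β) ≠ 0 := fun h => hBw (by rw [P.B_symm (w β) γ]; exact h)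
        have := (P.B_root_pos hγΦ).ne'
        intro hcon
        rcases mul_eq_zero.mp hcon with h | h
        · rw [div_eq_zero_iff] at h
          rcases h with h | h
          · exact hBγwβ (by linarith)
          · exact this h
        · exact hBne h
      · exact Finset.mem_filter.mpr ⟨hγ', w, hw, h0⟩
  intro γ hγ
  have hmem : γ ∈ t := hteq ▸ hγ
  exact (Finset.mem_filter.mp hmem).2

/-- reflection conjugation step for transitivity -/
lemma weyl_step {δ γ : V} (hδ : δ ∈ P.Φ) (hγ : γ ∈ P.Φ) (hlen : P.B δ δ = P.B γ γ)
    (hn : 2 * P.B γ δ / P.B γ γ = 1) : ∃ w ∈ P.weylGroup, w δ = γ := by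
  have hBγ := P.B_root_pos hγ
  have hBδ := P.B_root_pos hδ
  refine ⟨P.refl δ * (P.refl γ * P.refl δ),
    mul_mem (P.refl_mem_weyl hδ) (mul_mem (P.refl_mem_weyl hγ) (P.refl_mem_weyl hδ)), ?_⟩
  have happ : (P.refl δ * (P.refl γ * P.refl δ)) δ = P.refl δ (P.refl γ (P.refl δ δ)) := rfl
  rw [happ, P.refl_self hBδ.ne', map_neg, P.refl_apply hBγ.ne' δ, hn, one_smul, neg_sub,
    P.refl_apply hBδ.ne' (γ - δ)]
  have hBδγδ : 2 * P.B δ (γ - δ) / P.B δ δ = -1 := by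
    rw [map_sub]
    have hsymm : P.B δ γ = P.B γ δ := P.B_symm δ γ
    have : P.B γ δ = P.B γ γ / 2 := by
      field_simp at hn
      linarith
    rw [hsymm, this, hlen]
    field_simp
    ring
  rw [hBδγδ]
  simp

/-- the Weyl group acts transitively on roots of equal length -/
lemma weyl_transitive {β γ : V} (hβ : β ∈ P.Φ) (hγ : γ ∈ P.Φ)
    (hlen : P.B β β = P.B γ γ) : ∃ w ∈ P.weylGroup, w β = γ := by
  obtain ⟨w₀, hw₀, hB0⟩ := P.orbit_nonorthogonal hβ γ hγ
  set δ : V := w₀ β with hδdef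
  have hδΦ : δ ∈ P.Φ := P.weyl_root_mem hw₀ β hβ
  have hδlen : P.B δ δ = P.B γ γ := by
    rw [hδdef, P.weyl_isometry hw₀ β β, hlen]
  by_cases hδγ : δ = γ
  · exact ⟨w₀, hw₀, hδγ⟩
  by_cases hδγ' : δ = -γ
  · refine ⟨P.refl γ * w₀, mul_mem (P.refl_mem_weyl hγ) hw₀, ?_⟩
    have happ : (P.refl γ * w₀) β = P.refl γ (w₀ β) := rfl
    rw [happ, ← hδdef, hδγ', map_neg, P.refl_self (P.B_root_pos hγ).ne', neg_neg]
  -- δ is not proportional to γ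
  have hprop : ∀ c : ℚ, δ ≠ c • γ := by
    intro c hc
    rcases P.reduced γ hγ c (hc ▸ hδΦ) with h1 | h1
    · rw [h1, one_smul] at hc; exact hδγ hc
    · rw [h1] at hc
      apply hδγ'
      rw [hc]; simp
  have hcs : (P.B γ δ) ^ 2 < P.B γ γ * P.B δ δ :=
    P.cs_strict (P.root_ne_zero hγ) hprop
  obtain ⟨n, hn⟩ := P.integral γ hγ δ hδΦ
  have hBγδ : P.B γ δ ≠ 0 := fun h => hB0 (by rw [P.B_symm δ γ, h])
  have hBγ := P.B_root_pos hγ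
  have hn0 : (n : ℚ) ≠ 0 := by
    intro h
    rw [h] at hn
    rw [div_eq_zero_iff] at hn
    rcases hn with h1 | h1
    · exact hBγδ (by linarith)
    · exact hBγ.ne' h1
  have hnsq : (n : ℚ) ^ 2 < 4 := by
    have : (n : ℚ) = 2 * P.B γ δ / P.B γ γ := hn.symm
    rw [this]
    rw [div_pow, div_lt_iff₀ (by positivity)]
    rw [hδlen] at hcs
    nlinarith
  have hn1 : (n : ℚ) = 1 ∨ (n : ℚ) = -1 := by
    have h1 : n ^ 2 < 4 := by exact_mod_cast hnsq
    have h2 : n ≠ 0 := fun h => hn0 (by exact_mod_cast h)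
    have : n = 1 ∨ n = -1 := by
      rcases lt_trichotomy n 0 with h | h | h
      · right; nlinarith
      · exact absurd h h2
      · left; nlinarith
    rcases this with h | h
    · left; exact_mod_cast h
    · right; exact_mod_cast h
  rcases hn1 with h1 | h1
  · obtain ⟨w₁, hw₁, hw₁δ⟩ := P.weyl_step hδΦ hγ hδlen (by rw [hn]; exact h1)
    refine ⟨w₁ * w₀, mul_mem hw₁ hw₀, ?_⟩
    have happ : (w₁ * w₀) β = w₁ (w₀ β) := rfl
    rw [happ, ← hδdef, hw₁δ]
  · -- replace δ by -δ
    have hδ'Φ : -δ ∈ P.Φ := P.neg_mem hδΦ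
    have hδ'len : P.B (-δ) (-δ) = P.B γ γ := by
      rw [show P.B (-δ) (-δ) = P.B δ δ by simp, hδlen]
    have hn' : 2 * P.B γ (-δ) / P.B γ γ = 1 := by
      rw [map_neg]
      rw [show (2 : ℚ) * -P.B γ δ / P.B γ γ = -(2 * P.B γ δ / P.B γ γ) by ring, hn, h1]
      norm_num
    obtain ⟨w₁, hw₁, hw₁δ⟩ := P.weyl_step hδ'Φ hγ hδ'len hn'
    refine ⟨w₁ * (P.refl δ * w₀), mul_mem hw₁ (mul_mem (P.refl_mem_weyl hδΦ) hw₀), ?_⟩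
    have happ : (w₁ * (P.refl δ * w₀)) β = w₁ (P.refl δ (w₀ β)) := rfl
    rw [happ, ← hδdef, P.refl_self (P.B_root_pos hδΦ).ne', hw₁δ]

lemma dominant_nonneg_pos {v β : V} (hv : P.IsDominant v) (hβ : β ∈ P.posRoots) :
    0 ≤ P.B v β := by
  rw [P.B_expand v β]
  exact Finset.sum_nonneg (fun δ hδ =>
    mul_nonneg ((P.mem_posRoots.mp hβ).2 δ hδ) (hv δ hδ))

/-- two roots of different length have length ratio 2 or 3 -/
lemma length_ratio {x y : V} (hx : x ∈ P.Φ) (hy : y ∈ P.Φ) (hlt : P.B x x < P.B y y) :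
    P.B y y = 2 * P.B x x ∨ P.B y y = 3 * P.B x x := by
  obtain ⟨w, hw, hB⟩ := P.orbit_nonorthogonal hx y hy
  set x' : V := w x with hx'def
  have hx'Φ : x' ∈ P.Φ := P.weyl_root_mem hw x hx
  have hlen : P.B x' x' = P.B x x := P.weyl_isometry hw x x
  have hBxx := P.B_root_pos hx
  have hByy := P.B_root_pos hy
  have hsym : P.B y x' = P.B x' y := P.B_symm y x'
  have hBx' : P.B x' x' ≠ 0 := by rw [hlen]; exact hBxx.ne'
  have hByy' : P.B y y ≠ 0 := hByy.ne'
  obtain ⟨n, hn⟩ := P.integral y hy x' hx'Φ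
  obtain ⟨m, hm⟩ := P.integral x' hx'Φ y hy
  have hq : (n : ℚ) * P.B y y = (m : ℚ) * P.B x x := by
    have h1 : (n : ℚ) * P.B y y = 2 * P.B y x' := by
      rw [← hn]; field_simp
    have h2 : (m : ℚ) * P.B x x = 2 * P.B x' y := by
      rw [← hm, ← hlen]; field_simp
    rw [h1, h2, hsym]
  have hprop : ∀ c : ℚ, x' ≠ c • y := by
    intro c hc
    rcases P.reduced y hy c (hc ▸ hx'Φ) with h1 | h1 <;>
    · rw [h1] at hc
      have : P.B x' x' = P.B y y := by rw [hc]; simp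
      rw [hlen] at this
      linarith
  have hcs : (P.B y x') ^ 2 < P.B y y * P.B x' x' :=
    P.cs_strict (P.root_ne_zero hy) hprop
  have hBne : P.B y x' ≠ 0 := fun h => hB (by rw [← hsym]; exact h)
  have hnm4 : (n : ℚ) * m < 4 := by
    have hexp : (n : ℚ) * m = 4 * (P.B y x') ^ 2 / (P.B y y * P.B x x) := by
      rw [← hn, ← hm, hsym, ← hlen]
      field_simp
      ring
    rw [hexp, div_lt_iff₀ (by rw [← hlen] at hBxx ⊢; positivity)]
    rw [hlen] at hcs
    nlinarith
  have hnmpos : 0 < (n : ℚ) * m := by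
    have hexp : (n : ℚ) * m = 4 * (P.B y x') ^ 2 / (P.B y y * P.B x x) := by
      rw [← hn, ← hm, hsym, ← hlen]
      field_simp
      ring
    rw [hexp]
    have : 0 < (P.B y x') ^ 2 := by positivity
    positivity
  have hnm3 : (n : ℚ) * m ≤ 3 := by
    have h1 : n * m < 4 := by exact_mod_cast hnm4
    have : n * m ≤ 3 := by omega
    exact_mod_cast this
  have hn0 : n ≠ 0 := by
    intro h
    rw [h] at hnmpos; norm_num at hnmpos
  have hsq : (n : ℚ) ^ 2 * P.B y y = ((n * m : ℤ) : ℚ) * P.B x x := by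
    push_cast
    linear_combination (n : ℚ) * hq
  have hn2 : (n : ℚ) ^ 2 = 1 ∨ 4 ≤ (n : ℚ) ^ 2 := by
    have : n = 1 ∨ n = -1 ∨ n ≤ -2 ∨ 2 ≤ n := by omega
    rcases this with h | h | h | h
    · left; rw [h]; norm_num
    · left; rw [h]; norm_num
    · right
      have : 4 ≤ n ^ 2 := by nlinarith
      exact_mod_cast this
    · right
      have : 4 ≤ n ^ 2 := by nlinarith
      exact_mod_cast this
  rcases hn2 with h2 | h2
  · rw [h2, one_mul] at hsq
    have hnm1 : n * m ≠ 1 := by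
      intro h
      rw [h] at hsq
      push_cast at hsq
      linarith
    have : n * m = 2 ∨ n * m = 3 := by
      have ha : 1 ≤ n * m := by
        have : (0:ℚ) < n*m := hnmpos
        have : 0 < n * m := by exact_mod_cast this
        omega
      have hb : n * m ≤ 3 := by
        have : (n:ℚ) * m ≤ 3 := by exact_mod_cast hnm3
        have h4 : (n*m : ℤ) ≤ 3 := by exact_mod_cast hnm3
        omega
      omega
    rcases this with h | h
    · left; rw [h] at hsq; push_cast at hsq; linarith
    · right; rw [h] at hsq; push_cast at hsq; linarith
  · exfalso
    have h3 : ((n * m : ℤ) : ℚ) ≤ 3 := by push_cast; exact_mod_cast hnm3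
    nlinarith [hsq, hByy, hBxx, hlt]

lemma no_three_lengths {a b c : V} (ha : a ∈ P.Φ) (hb : b ∈ P.Φ) (hc : c ∈ P.Φ)
    (h1 : P.B a a < P.B b b) (h2 : P.B b b < P.B c c) : False := by
  have hBa := P.B_root_pos ha
  rcases P.length_ratio ha hb h1 with hr1 | hr1 <;>
  rcases P.length_ratio hb hc h2 with hr2 | hr2 <;>
  rcases P.length_ratio ha hc (lt_trans h1 h2) with hr3 | hr3 <;>
  nlinarith

/-- the highest root is a longest root -/
lemma highest_longest {h : V} (hhr : P.IsHighestRoot h) (hpos : h ∈ P.posRoots)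
    (hfull : ∀ δ ∈ P.Δ, 0 < P.coord h δ) (hdom : P.IsDominant h)
    {β : V} (hβ : β ∈ P.Φ) : P.B β β ≤ P.B h h := by
  have hhΦ : h ∈ P.Φ := hhr.1
  have hBh := P.B_root_pos hhΦ
  obtain ⟨w, hw, hB⟩ := P.orbit_nonorthogonal hβ h hhΦ
  -- choose γ in the orbit of β with (γ, h) > 0
  have hkey : ∃ γ ∈ P.Φ, P.B γ γ = P.B β β ∧ 0 < P.B γ h := by
    have hw0 : w β ∈ P.Φ := P.weyl_root_mem hw β hβ
    have hwlen : P.B (w β) (w β) = P.B β β := P.weyl_isometry hw β β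
    rcases lt_trichotomy (P.B (w β) h) 0 with hlt | heq | hgt
    · refine ⟨-(w β), P.neg_mem hw0, by simp [hwlen], ?_⟩
      rw [map_neg, LinearMap.neg_apply]
      linarith
    · exact absurd heq hB
    · exact ⟨w β, hw0, hwlen, hgt⟩
  obtain ⟨γ, hγΦ, hγlen, hγh⟩ := hkey
  by_cases hγeq : γ = h
  · rw [← hγlen, hγeq]
  -- γ is positive
  have hγpos : γ ∈ P.posRoots := by
    rcases P.pos_or_neg_mem hγΦ with hp | hp
    · exact hp
    · exfalso
      have h1 : 0 ≤ P.B h (-γ) := P.dominant_nonneg_pos hdom hp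
      rw [map_neg] at h1
      have h2 : P.B h γ = P.B γ h := P.B_symm h γ
      linarith
  -- pairing m = ⟨γ, h^∨⟩
  obtain ⟨m, hm⟩ := P.integral h hhΦ γ hγΦ
  have hm1 : 1 ≤ (m : ℚ) := int_pos_ge_one ⟨m, rfl⟩
    (by rw [← hm]; exact div_pos (by rw [P.B_symm h γ]; linarith) hBh)
  have hm1' : (m : ℚ) = 1 := by
    by_contra hne
    have hm2 : 2 ≤ (m : ℚ) := by
      have : (1:ℤ) < m := by
        have : (1:ℚ) < m := lt_of_le_of_ne hm1 (Ne.symm hne)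
        exact_mod_cast this
      exact_mod_cast this
    -- ρ := m•h - γ is a positive root dominated by h
    have hrefl : γ - (2 * P.B h γ / P.B h h) • h ∈ P.Φ := P.reflect_mem h hhΦ γ hγΦ
    rw [hm] at hrefl
    have hρ : ((m : ℚ) • h - γ) ∈ P.Φ := by
      have := P.neg_mem hrefl
      rwa [neg_sub] at this
    have hρcoord : ∀ δ ∈ P.Δ, P.coord ((m : ℚ) • h - γ) δ
        = (m : ℚ) * P.coord h δ - P.coord γ δ := by
      intro δ hδ
      rw [P.coord_sub _ _ δ hδ, P.coord_smul _ _ δ hδ]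
    have hρpos : ((m : ℚ) • h - γ) ∈ P.posRoots := by
      obtain ⟨δ₀, hδ₀⟩ : P.Δ.Nonempty := by
        obtain ⟨δ₀, hδ₀, _⟩ := P.exists_coord_pos hpos
        exact ⟨δ₀, hδ₀⟩
      refine P.root_pos_of_coord_pos hρ hδ₀ ?_
      rw [hρcoord δ₀ hδ₀]
      have hle := hhr.2 γ hγpos δ₀ hδ₀
      have hfull0 := hfull δ₀ hδ₀
      nlinarith
    -- coordinates squeeze
    have hsqueeze : ∀ δ ∈ P.Δ, P.coord γ δ = P.coord h δ := by
      intro δ hδ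
      have hle1 := hhr.2 γ hγpos δ hδ
      have hle2 := hhr.2 _ hρpos δ hδ
      rw [hρcoord δ hδ] at hle2
      have hfullδ := hfull δ hδ
      nlinarith
    exact hγeq (by
      rw [P.coord_spec γ, P.coord_spec h]
      exact Finset.sum_congr rfl (fun δ hδ => by rw [hsqueeze δ hδ]))
  -- now ⟨γ,h^∨⟩ = 1 so (γ,γ) ≤ (h,h)
  obtain ⟨n, hn⟩ := P.integral γ hγΦ h hhΦ
  have hn1 : 1 ≤ (n : ℚ) := int_pos_ge_one ⟨n, rfl⟩
    (by rw [← hn]; exact div_pos (by linarith) (P.B_root_pos hγΦ))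
  -- n * (γ,γ) = 2 (γ,h) = 2 (h,γ) = m * (h,h) = (h,h)
  have hrel : (n : ℚ) * P.B γ γ = (m : ℚ) * P.B h h := by
    have hBγne := (P.B_root_pos hγΦ).ne'
    have hBhne := hBh.ne'
    have e1 : (n : ℚ) * P.B γ γ = 2 * P.B γ h := by
      rw [← hn]; field_simp
    have e2 : (m : ℚ) * P.B h h = 2 * P.B h γ := by
      rw [← hm]; field_simp
    rw [e1, e2, P.B_symm γ h]
  rw [hm1', one_mul] at hrel
  rw [← hγlen, ← hrel]
  nlinarith [P.B_root_pos hγΦ]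

section Dual

lemma coroot_ne_zero {β : V} (hβ : β ∈ P.Φ) : P.coroot β ≠ 0 := by
  unfold coroot
  exact smul_ne_zero (div_ne_zero two_ne_zero (P.B_root_pos hβ).ne') (P.root_ne_zero hβ)

lemma B_coroot_left (β v : V) : P.B (P.coroot β) v = (2 / P.B β β) * P.B β v := by
  unfold coroot
  rw [map_smul, LinearMap.smul_apply, smul_eq_mul]

lemma B_coroot_right (v β : V) : P.B v (P.coroot β) = (2 / P.B β β) * P.B v β := by
  unfold coroot
  rw [map_smul, smul_eq_mul]

lemma B_coroot_self {β : V} (hβ : β ∈ P.Φ) :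
    P.B (P.coroot β) (P.coroot β) = 4 / P.B β β := by
  rw [P.B_coroot_left, P.B_coroot_right]
  have := (P.B_root_pos hβ).ne'
  field_simp
  ring

lemma smul_coroot {β : V} (hβ : β ∈ P.Φ) : (P.B β β / 2) • P.coroot β = β := by
  unfold coroot
  rw [smul_smul]
  have := (P.B_root_pos hβ).ne'
  rw [show P.B β β / 2 * (2 / P.B β β) = 1 by field_simp, one_smul]

lemma coroot_inj {β γ : V} (hβ : β ∈ P.Φ) (hγ : γ ∈ P.Φ)
    (h : P.coroot β = P.coroot γ) : β = γ := by
  have hβne := (P.B_root_pos hβ).ne'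
  have hγne := (P.B_root_pos hγ).ne'
  have h1 : γ = (P.B γ γ / 2) • (P.coroot β) := by
    rw [h]; exact (P.smul_coroot hγ).symm
  have hc : γ = (P.B γ γ / P.B β β) • β := by
    conv_lhs => rw [h1]
    unfold coroot
    rw [smul_smul]
    congr 1
    field_simp
  have hmem : (P.B γ γ / P.B β β) • β ∈ P.Φ := hc ▸ hγ
  rcases P.reduced β hβ _ hmem with h1 | h1
  · rw [hc, h1, one_smul]
  · exfalso
    have hpos : 0 < P.B γ γ / P.B β β := div_pos (P.B_root_pos hγ) (P.B_root_pos hβ)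
    rw [h1] at hpos
    norm_num at hpos

lemma corootMult_sign {β : V} (hβ : β ∈ P.Φ) {δ : V} (hδ : δ ∈ P.Δ) :
    P.corootMult β δ = P.coord β δ * (P.B δ δ / P.B β β) := by
  unfold corootMult coroot
  rw [P.coord_smul _ _ δ hδ]
  have := (P.B_root_pos hβ).ne'
  field_simp

lemma coroot_reflect {β γ : V} (hβ : β ∈ P.Φ) (hγ : γ ∈ P.Φ) :
    P.coroot γ - (2 * P.B (P.coroot β) (P.coroot γ) / P.B (P.coroot β) (P.coroot β))
      • P.coroot β = P.coroot (P.refl β γ) := by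
  have hβne := (P.B_root_pos hβ).ne'
  have hγne := (P.B_root_pos hγ).ne'
  have hpair : 2 * P.B (P.coroot β) (P.coroot γ) / P.B (P.coroot β) (P.coroot β)
      = 2 * P.B β γ / P.B γ γ := by
    rw [P.B_coroot_left, P.B_coroot_right, P.B_coroot_self hβ]
    field_simp
    ring
  have hlen : P.B (P.refl β γ) (P.refl β γ) = P.B γ γ := by
    have h1 := P.refl_isometry β γ γ
    rw [h1]
  have hval : P.refl β γ = γ - (2 * P.B β γ / P.B β β) • β := P.refl_apply hβne γ
  rw [hpair]
  unfold coroot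
  rw [hlen, hval]
  rw [smul_sub, smul_smul, smul_smul]
  congr 1
  congr 1
  field_simp

/-- the dual coordinate function -/
noncomputable def dcoord [DecidableEq V] (v u : V) : ℚ :=
  ∑ δ ∈ P.Δ.filter (fun δ => P.coroot δ = u), P.coord v δ * (P.B δ δ / 2)

lemma coroot_injOn_Δ : ∀ x ∈ P.Δ, ∀ y ∈ P.Δ, P.coroot x = P.coroot y → x = y :=
  fun x hx y hy h => P.coroot_inj (P.Δ_sub hx) (P.Δ_sub hy) h

lemma dcoord_eval [DecidableEq V] (v : V) {δ : V} (hδ : δ ∈ P.Δ) :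
    P.dcoord v (P.coroot δ) = P.coord v δ * (P.B δ δ / 2) := by
  unfold dcoord
  have hfilter : P.Δ.filter (fun δ' => P.coroot δ' = P.coroot δ) = {δ} := by
    ext δ'
    simp only [Finset.mem_filter, Finset.mem_singleton]
    constructor
    · rintro ⟨h1, h2⟩
      exact P.coroot_injOn_Δ δ' h1 δ hδ h2
    · rintro rfl
      exact ⟨hδ, rfl⟩
  rw [hfilter, Finset.sum_singleton]

lemma dcoord_coroot [DecidableEq V] {β : V} (hβ : β ∈ P.Φ) {δ : V} (hδ : δ ∈ P.Δ) :
    P.dcoord (P.coroot β) (P.coroot δ) = P.corootMult β δ := by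
  rw [P.dcoord_eval _ hδ]
  rfl

/-- generic linear independence from a coordinate-uniqueness property -/
lemma indep_of_unique {s : Finset V}
    (h : ∀ c : V → ℚ, ∑ u ∈ s, c u • u = 0 → ∀ u ∈ s, c u = 0) :
    LinearIndependent ℚ (Subtype.val : {x : V // x ∈ s} → V) := by
  classical
  rw [Fintype.linearIndependent_iff]
  intro g hg i
  set c : V → ℚ := fun u => if h : u ∈ s then g ⟨u, h⟩ else 0 with hc
  have hsum : ∑ u ∈ s, c u • u = 0 := by
    rw [← Finset.sum_coe_sort s (fun u => c u • u), ← hg]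
    refine Finset.sum_congr rfl (fun i _ => ?_)
    show c i.1 • i.1 = g i • i.1
    congr 1
    simp [hc, i.2]
  have h0 := h c hsum i.1 i.2
  simp [hc, i.2] at h0
  exact h0

/-- the dual root system -/
noncomputable def dual [DecidableEq V] : RootSystemBase V where
  B := P.B
  B_symm := P.B_symm
  B_posdef := P.B_posdef
  Φ := P.Φ.image P.coroot
  zero_notMem := by
    intro h
    obtain ⟨β, hβ, h0⟩ := Finset.mem_image.mp h
    exact P.coroot_ne_zero hβ h0
  span_top := by
    apply le_antisymm le_top
    rw [← P.span_top]
    apply Submodule.span_le.mpr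
    intro v hv
    have hvΦ : v ∈ P.Φ := hv
    have : v = (P.B v v / 2) • P.coroot v := (P.smul_coroot hvΦ).symm
    rw [this]
    exact Submodule.smul_mem _ _ (Submodule.subset_span
      (Finset.mem_coe.mpr (Finset.mem_image_of_mem _ hvΦ)))
  reflect_mem := by
    intro b hb c hc
    obtain ⟨β, hβ, rfl⟩ := Finset.mem_image.mp hb
    obtain ⟨γ, hγ, rfl⟩ := Finset.mem_image.mp hc
    rw [P.coroot_reflect hβ hγ]
    exact Finset.mem_image_of_mem _ (P.refl_root_mem hβ hγ)
  integral := by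
    intro b hb c hc
    obtain ⟨β, hβ, rfl⟩ := Finset.mem_image.mp hb
    obtain ⟨γ, hγ, rfl⟩ := Finset.mem_image.mp hc
    have hpair : 2 * P.B (P.coroot β) (P.coroot γ) / P.B (P.coroot β) (P.coroot β)
        = 2 * P.B γ β / P.B γ γ := by
      rw [P.B_coroot_left, P.B_coroot_right, P.B_coroot_self hβ, P.B_symm β γ]
      have hβne := (P.B_root_pos hβ).ne'
      have hγne := (P.B_root_pos hγ).ne'
      field_simp
      ring
    rw [hpair]
    exact P.integral γ hγ β hβ
  reduced := by
    intro b hb c hc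
    obtain ⟨β, hβ, rfl⟩ := Finset.mem_image.mp hb
    obtain ⟨γ, hγ, hγc⟩ := Finset.mem_image.mp hc
    have hβne := (P.B_root_pos hβ).ne'
    have hγne := (P.B_root_pos hγ).ne'
    have hγval : γ = (c * P.B γ γ / P.B β β) • β := by
      conv_lhs => rw [← P.smul_coroot hγ, hγc]
      unfold coroot
      rw [smul_smul, smul_smul]
      congr 1
      field_simp
    have hmem : (c * P.B γ γ / P.B β β) • β ∈ P.Φ := hγval ▸ hγ
    rcases P.reduced β hβ _ hmem with h1 | h1
    · left
      have hγβ : γ = β := by rw [hγval, h1, one_smul]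
      rw [hγβ] at hγc
      have h2 : c • P.coroot β = (1 : ℚ) • P.coroot β := by
        rw [one_smul]; exact hγc.symm
      exact smul_left_injective ℚ (P.coroot_ne_zero hβ) (M := V) h2
    · right
      have hγβ : γ = -β := by rw [hγval, h1]; simp
      rw [hγβ, P.coroot_neg] at hγc
      have h2 : c • P.coroot β = (-1 : ℚ) • P.coroot β := by
        rw [neg_one_smul]; exact hγc.symm
      exact smul_left_injective ℚ (P.coroot_ne_zero hβ) (M := V) h2
  irreducible := by
    intro s hs hsne hsorth
    have hs' : P.Φ.filter (fun β => P.coroot β ∈ s) = P.Φ := by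
      apply P.irreducible _ (Finset.filter_subset _ _)
      · obtain ⟨b, hb⟩ := hsne
        obtain ⟨β, hβ, rfl⟩ := Finset.mem_image.mp (hs hb)
        exact ⟨β, Finset.mem_filter.mpr ⟨hβ, hb⟩⟩
      · intro β hβ γ hγ hγs
        obtain ⟨hβΦ, hβs⟩ := Finset.mem_filter.mp hβ
        have hcγ : P.coroot γ ∉ s := fun h => hγs (Finset.mem_filter.mpr ⟨hγ, h⟩)
        have := hsorth (P.coroot β) hβs (P.coroot γ)
          (Finset.mem_image_of_mem _ hγ) hcγ
        rw [P.B_coroot_left, P.B_coroot_right] at this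
        have hβne := (P.B_root_pos hβΦ).ne'
        have hγne := (P.B_root_pos hγ).ne'
        field_simp at this
        linarith
    apply Finset.Subset.antisymm hs
    intro b hb
    obtain ⟨β, hβ, rfl⟩ := Finset.mem_image.mp hb
    have hmem2 : β ∈ P.Φ.filter (fun β => P.coroot β ∈ s) := by rw [hs']; exact hβ
    exact (Finset.mem_filter.mp hmem2).2
  Δ := P.Δ.image P.coroot
  Δ_sub := Finset.image_subset_image P.Δ_sub
  Δ_indep := by
    apply indep_of_unique
    intro c hc u hu
    obtain ⟨δ, hδ, rfl⟩ := Finset.mem_image.mp hu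
    rw [Finset.sum_image P.coroot_injOn_Δ] at hc
    have hc2 : ∑ δ ∈ P.Δ, (c (P.coroot δ) * (2 / P.B δ δ)) • δ = 0 := by
      rw [← hc]
      refine Finset.sum_congr rfl (fun δ' hδ' => ?_)
      unfold coroot
      rw [smul_smul]
    have := P.coord_unique hc2 δ hδ
    have hne : (2 : ℚ) / P.B δ δ ≠ 0 := by
      have := (P.B_root_pos (P.Δ_sub hδ)).ne'
      positivity
    rcases mul_eq_zero.mp this with h | h
    · exact h
    · exact absurd h hne
  coord := P.dcoord
  coord_spec := by
    intro v
    rw [Finset.sum_image P.coroot_injOn_Δ]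
    have : ∀ δ ∈ P.Δ, P.dcoord v (P.coroot δ) • P.coroot δ = P.coord v δ • δ := by
      intro δ hδ
      rw [P.dcoord_eval v hδ]
      unfold coroot
      rw [smul_smul]
      congr 1
      have := (P.B_root_pos (P.Δ_sub hδ)).ne'
      field_simp
    rw [Finset.sum_congr rfl this]
    exact P.coord_spec v
  coord_int := by
    intro b hb u hu
    obtain ⟨β, hβ, rfl⟩ := Finset.mem_image.mp hb
    obtain ⟨δ, hδ, rfl⟩ := Finset.mem_image.mp hu
    rw [P.dcoord_coroot hβ hδ]
    exact P.corootMult_int hβ hδ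
  pos_or_neg := by
    intro b hb
    obtain ⟨β, hβ, rfl⟩ := Finset.mem_image.mp hb
    have hsign : ∀ δ ∈ P.Δ, P.dcoord (P.coroot β) (P.coroot δ)
        = P.coord β δ * (P.B δ δ / P.B β β) := by
      intro δ hδ
      rw [P.dcoord_coroot hβ hδ, P.corootMult_sign hβ hδ]
    rcases P.pos_or_neg β hβ with h | h
    · left
      intro u hu
      obtain ⟨δ, hδ, rfl⟩ := Finset.mem_image.mp hu
      rw [hsign δ hδ]
      have h1 := div_pos (P.B_root_pos (P.Δ_sub hδ)) (P.B_root_pos hβ)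
      exact mul_nonneg (h δ hδ) h1.le
    · right
      intro u hu
      obtain ⟨δ, hδ, rfl⟩ := Finset.mem_image.mp hu
      rw [hsign δ hδ]
      have h1 := div_pos (P.B_root_pos (P.Δ_sub hδ)) (P.B_root_pos hβ)
      exact mul_nonpos_iff.mpr (Or.inr ⟨h δ hδ, h1.le⟩)

lemma mem_dual_posRoots [DecidableEq V] {β : V} (hβ : β ∈ P.Φ) :
    P.coroot β ∈ (P.dual).posRoots ↔ β ∈ P.posRoots := by
  rw [(P.dual).mem_posRoots, P.mem_posRoots]
  constructor
  · rintro ⟨h1, h2⟩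
    refine ⟨hβ, fun δ hδ => ?_⟩
    have hval := h2 (P.coroot δ) (Finset.mem_image_of_mem _ hδ)
    rw [show (P.dual).coord (P.coroot β) (P.coroot δ) = P.corootMult β δ from
      P.dcoord_coroot hβ hδ, P.corootMult_sign hβ hδ] at hval
    have hr := div_pos (P.B_root_pos (P.Δ_sub hδ)) (P.B_root_pos hβ)
    by_contra hneg
    push_neg at hneg
    nlinarith
  · rintro ⟨h1, h2⟩
    refine ⟨Finset.mem_image_of_mem _ hβ, fun u hu => ?_⟩
    obtain ⟨δ, hδ, rfl⟩ := Finset.mem_image.mp hu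
    rw [show (P.dual).coord (P.coroot β) (P.coroot δ) = P.corootMult β δ from
      P.dcoord_coroot hβ hδ, P.corootMult_sign hβ hδ]
    exact mul_nonneg (h2 δ hδ)
      (div_pos (P.B_root_pos (P.Δ_sub hδ)) (P.B_root_pos hβ)).le

/-- coordinates recovered from coroot multiplicities -/
lemma coord_coroot_eq {β δ : V} (hδ : δ ∈ P.Δ) :
    P.coord (P.coroot β) δ = P.corootMult β δ * (2 / P.B δ δ) := by
  unfold corootMult
  have := (P.B_root_pos (P.Δ_sub hδ)).ne'
  field_simp

/-- the main existence package: highest root and dual highest root -/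
lemma exists_h_h2 [DecidableEq V] {α : V} (hα : α ∈ P.Δ) :
    ∃ h h₂ : V, P.IsHighestRoot h ∧ h ∈ P.posRoots ∧ (∀ δ ∈ P.Δ, 0 < P.coord h δ) ∧
      (∀ β ∈ P.Φ, P.B β β ≤ P.B h h) ∧
      P.IsDualHighest h₂ ∧ h₂ ∈ P.posRoots ∧ (∀ δ ∈ P.Δ, 0 < P.corootMult h₂ δ) ∧
      (∀ β ∈ P.Φ, P.B h₂ h₂ ≤ P.B β β) ∧
      (∀ h' : V, P.IsHighestRoot h' → h' = h) ∧
      (∀ h₂' : V, P.IsDualHighest h₂' → h₂' = h₂) := by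
  obtain ⟨h, hhr, hhpos, hhfull, hhdom⟩ := P.exists_highest hα
  have hhlong : ∀ β ∈ P.Φ, P.B β β ≤ P.B h h :=
    fun β hβ => P.highest_longest hhr hhpos hhfull hhdom hβ
  -- dual side
  set Pd := P.dual with hPd
  have hαd : P.coroot α ∈ Pd.Δ := Finset.mem_image_of_mem _ hα
  obtain ⟨H, hHr, hHpos, hHfull, hHdom⟩ := Pd.exists_highest hαd
  obtain ⟨h₂, hh₂Φ, hH⟩ := Finset.mem_image.mp hHr.1
  -- H = coroot h₂
  have hHeq : H = P.coroot h₂ := hH.symm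
  subst hHeq
  have hdh : P.IsDualHighest h₂ := by
    refine ⟨hh₂Φ, fun β hβ δ hδ => ?_⟩
    have h1 := hHr.2 (P.coroot β) ((P.mem_dual_posRoots (P.posRoots_subset hβ)).mpr hβ)
      (P.coroot δ) (Finset.mem_image_of_mem _ hδ)
    rw [show Pd.coord (P.coroot β) (P.coroot δ) = P.corootMult β δ from
      P.dcoord_coroot (P.posRoots_subset hβ) hδ,
      show Pd.coord (P.coroot h₂) (P.coroot δ) = P.corootMult h₂ δ from
      P.dcoord_coroot hh₂Φ hδ] at h1
    exact h1
  have hh₂pos : h₂ ∈ P.posRoots := (P.mem_dual_posRoots hh₂Φ).mp hHpos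
  have hh₂full : ∀ δ ∈ P.Δ, 0 < P.corootMult h₂ δ := by
    intro δ hδ
    have := hHfull (P.coroot δ) (Finset.mem_image_of_mem _ hδ)
    rwa [show Pd.coord (P.coroot h₂) (P.coroot δ) = P.corootMult h₂ δ from
      P.dcoord_coroot hh₂Φ hδ] at this
  have hh₂short : ∀ β ∈ P.Φ, P.B h₂ h₂ ≤ P.B β β := by
    intro β hβ
    have h1 := Pd.highest_longest hHr hHpos hHfull hHdom
      (Finset.mem_image_of_mem P.coroot hβ)
    rw [show Pd.B = P.B from rfl] at h1
    rw [P.B_coroot_self hβ, P.B_coroot_self hh₂Φ] at h1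
    have hb := P.B_root_pos hβ
    have hb2 := P.B_root_pos hh₂Φ
    rw [div_le_div_iff₀ hb hb2] at h1
    linarith
  refine ⟨h, h₂, hhr, hhpos, hhfull, hhlong, hdh, hh₂pos, hh₂full, hh₂short, ?_, ?_⟩
  · -- uniqueness of highest root
    intro h' hh'
    have hle : ∀ δ ∈ P.Δ, P.coord h δ ≤ P.coord h' δ := fun δ hδ => hh'.2 h hhpos δ hδ
    obtain ⟨δ₀, hδ₀⟩ : P.Δ.Nonempty := ⟨α, hα⟩
    have hh'pos : h' ∈ P.posRoots := P.root_pos_of_coord_pos hh'.1 hδ₀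
      (lt_of_lt_of_le (hhfull δ₀ hδ₀) (hle δ₀ hδ₀))
    have hge : ∀ δ ∈ P.Δ, P.coord h' δ ≤ P.coord h δ := fun δ hδ => hhr.2 h' hh'pos δ hδ
    rw [P.coord_spec h', P.coord_spec h]
    exact Finset.sum_congr rfl (fun δ hδ => by
      rw [le_antisymm (hge δ hδ) (hle δ hδ)])
  · -- uniqueness of dual highest root
    intro h₂' hh₂'
    have hle : ∀ δ ∈ P.Δ, P.corootMult h₂ δ ≤ P.corootMult h₂' δ :=
      fun δ hδ => hh₂'.2 h₂ hh₂pos δ hδ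
    obtain ⟨δ₀, hδ₀⟩ : P.Δ.Nonempty := ⟨α, hα⟩
    have hh₂'pos : h₂' ∈ P.posRoots := by
      refine P.root_pos_of_coord_pos hh₂'.1 hδ₀ ?_
      have h1 := lt_of_lt_of_le (hh₂full δ₀ hδ₀) (hle δ₀ hδ₀)
      rw [P.corootMult_sign hh₂'.1 hδ₀] at h1
      have hr := div_pos (P.B_root_pos (P.Δ_sub hδ₀)) (P.B_root_pos hh₂'.1)
      by_contra hneg
      push_neg at hneg
      nlinarith
    have hge : ∀ δ ∈ P.Δ, P.corootMult h₂' δ ≤ P.corootMult h₂ δ :=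
      fun δ hδ => hdh.2 h₂' hh₂'pos δ hδ
    have hcoreq : P.coroot h₂' = P.coroot h₂ := by
      rw [P.coord_spec (P.coroot h₂'), P.coord_spec (P.coroot h₂)]
      refine Finset.sum_congr rfl (fun δ hδ => ?_)
      rw [P.coord_coroot_eq hδ, P.coord_coroot_eq hδ,
        le_antisymm (hge δ hδ) (hle δ hδ)]
    exact P.coroot_inj hh₂'.1 hh₂Φ hcoreq

/-- evaluation of a fundamental weight against arbitrary vectors -/
lemma weight_eval [DecidableEq V] {η α : V} (hα : α ∈ P.Δ)
    (hη : ∀ α' ∈ P.Δ, P.B η (P.coroot α') = if α' = α then 1 else 0) (v : V) :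
    P.B η v = P.coord v α * (P.B α α / 2) := by
  classical
  rw [P.B_expand η v]
  have hterm : ∀ δ ∈ P.Δ, P.coord v δ * P.B η δ
      = if δ = α then P.coord v δ * (P.B δ δ / 2) else 0 := by
    intro δ hδ
    have hBηδ : P.B η δ = (P.B δ δ / 2) * (if δ = α then 1 else 0) := by
      conv_lhs => rw [← P.smul_coroot (P.Δ_sub hδ)]
      rw [map_smul, smul_eq_mul, hη δ hδ]
    rw [hBηδ]
    split_ifs with hcase
    · ring
    · ring
  rw [Finset.sum_congr rfl hterm, Finset.sum_ite_eq' P.Δ α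
    (fun δ => P.coord v δ * (P.B δ δ / 2))]
  simp [hα]

lemma weight_coroot [DecidableEq V] {η α : V} (hα : α ∈ P.Δ)
    (hη : ∀ α' ∈ P.Δ, P.B η (P.coroot α') = if α' = α then 1 else 0) (β : V) :
    P.B η (P.coroot β) = P.corootMult β α :=
  P.weight_eval hα hη (P.coroot β)

end Dual

end RootSystemBase

end Lemmas

open RootSystemBase in
/-- The fundamental weight `η(α)` is quasi-constant iff `α` is special or co-special. -/
theorem quasiConstant_iff_special_or_cospecial
    {V : Type*} [AddCommGroup V] [Module ℚ V] [FiniteDimensional ℚ V] [DecidableEq V]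
    (P : RootSystemBase V) (α : V) (hα : α ∈ P.Δ)
    (η : V) (hη : ∀ α' ∈ P.Δ, P.B η (P.coroot α') = if α' = α then 1 else 0) :
    P.IsQuasiConstant η ↔ (P.IsSpecial α ∨ P.IsCospecial α) := by
  classical
  obtain ⟨h, h₂, hhr, hhpos, hhfull, hhlong, hdh, hh₂pos, hh₂full, hh₂short, huniq, huniq₂⟩ :=
    P.exists_h_h2 hα
  have hαΦ : α ∈ P.Φ := P.Δ_sub hα
  have hf : ∀ β : V, P.B η (P.coroot β) = P.corootMult β α := P.weight_coroot hα hη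
  have hsign : ∀ β ∈ P.Φ, P.corootMult β α = P.coord β α * (P.B α α / P.B β β) :=
    fun β hβ => P.corootMult_sign hβ hα
  constructor
  · intro hqc
    have hfα : P.B η (P.coroot α) = 1 := by rw [hη α hα]; simp
    by_cases hlenh : P.B α α = P.B h h
    · left
      refine ⟨hα, fun h' hh' => ?_⟩
      rw [huniq h' hh']
      obtain ⟨w, hw, hwα⟩ := P.weyl_transitive hαΦ hhr.1 hlenh
      have hmem := hqc α hαΦ (by rw [hfα]; norm_num) w hw
      rw [hfα, div_one, P.weyl_coroot hw, hwα, hf h] at hmem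
      rw [hsign h hhr.1, ← hlenh] at hmem
      have hBα := P.B_root_pos hαΦ
      rw [div_self hBα.ne', mul_one] at hmem
      have h1 : 1 ≤ P.coord h α := int_pos_ge_one (P.coord_int h hhr.1 α hα) (hhfull α hα)
      simp only [Set.mem_insert_iff, Set.mem_singleton_iff] at hmem
      rcases hmem with h2 | h2 | h2 <;> linarith
    · by_cases hlenh₂ : P.B α α = P.B h₂ h₂
      · right
        refine ⟨hα, fun h₂' hh₂' => ?_⟩
        rw [huniq₂ h₂' hh₂']
        obtain ⟨w, hw, hwα⟩ := P.weyl_transitive hαΦ hdh.1 hlenh₂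
        have hmem := hqc α hαΦ (by rw [hfα]; norm_num) w hw
        rw [hfα, div_one, P.weyl_coroot hw, hwα, hf h₂] at hmem
        have h1 : P.corootMult α α = 1 := by
          rw [P.corootMult_simple hα hα]; simp
        have h2 : 1 ≤ P.corootMult h₂ α := by
          have h3 := hdh.2 α (P.simple_mem_posRoots hα) α hα
          rw [h1] at h3
          exact h3
        simp only [Set.mem_insert_iff, Set.mem_singleton_iff] at hmem
        rcases hmem with h3 | h3 | h3 <;> linarith
      · exfalso
        have hle1 := hh₂short α hαΦ
        have hle2 := hhlong α hαΦ
        exact P.no_three_lengths hdh.1 hαΦ hhr.1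
          (lt_of_le_of_ne hle1 (fun hcon => hlenh₂ hcon.symm)) (lt_of_le_of_ne hle2 hlenh)
  · intro hsp β hβ hfβ w hw
    have hwβ : w β ∈ P.Φ := P.weyl_root_mem hw β hβ
    rw [P.weyl_coroot hw, hf (w β), hf β]
    rw [hf β] at hfβ
    rcases hsp with hspecial | hcosp
    · have hch : P.coord h α = 1 := hspecial.2 h hhr
      have hbound : ∀ γ ∈ P.posRoots, P.coord γ α = 0 ∨ P.coord γ α = 1 := by
        intro γ hγ
        have h1 := (P.mem_posRoots.mp hγ).2 α hα
        have h2 := hhr.2 γ hγ α hα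
        rw [hch] at h2
        obtain ⟨k, hk⟩ := P.coord_int γ (P.posRoots_subset hγ) α hα
        rw [hk] at h1 h2 ⊢
        have hk0 : (0:ℤ) ≤ k := by exact_mod_cast h1
        have hk1 : k ≤ 1 := by exact_mod_cast h2
        interval_cases k
        · left; norm_num
        · right; norm_num
      have hboundΦ : ∀ γ ∈ P.Φ,
          P.coord γ α = 0 ∨ P.coord γ α = 1 ∨ P.coord γ α = -1 := by
        intro γ hγ
        rcases P.pos_or_neg_mem hγ with hp | hp
        · rcases hbound γ hp with h' | h'
          · exact Or.inl h'
          · exact Or.inr (Or.inl h')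
        · rcases hbound (-γ) hp with h' | h' <;> rw [P.coord_neg γ α hα] at h'
          · exact Or.inl (by linarith)
          · exact Or.inr (Or.inr (by linarith))
      have hlenw : P.B (w β) (w β) = P.B β β := P.weyl_isometry hw β β
      rw [hsign (w β) hwβ, hsign β hβ, hlenw]
      rw [hsign β hβ] at hfβ
      have hr : 0 < P.B α α / P.B β β := div_pos (P.B_root_pos hαΦ) (P.B_root_pos hβ)
      have hcβ : P.coord β α = 1 ∨ P.coord β α = -1 := by
        rcases hboundΦ β hβ with h' | h' | h'
        · exfalso; apply hfβ; rw [h', zero_mul]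
        · exact Or.inl h'
        · exact Or.inr h'
      have hratio : P.coord (w β) α * (P.B α α / P.B β β)
          / (P.coord β α * (P.B α α / P.B β β))
          = P.coord (w β) α / P.coord β α := by
        rw [mul_div_mul_right _ _ hr.ne']
      rw [hratio]
      simp only [Set.mem_insert_iff, Set.mem_singleton_iff]
      rcases hboundΦ (w β) hwβ with h1 | h1 | h1 <;> rcases hcβ with h2 | h2 <;>
        rw [h1, h2] <;> norm_num
    · have hch : P.corootMult h₂ α = 1 := hcosp.2 h₂ hdh
      have hbound : ∀ γ ∈ P.posRoots, P.corootMult γ α = 0 ∨ P.corootMult γ α = 1 := by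
        intro γ hγ
        have h1 : 0 ≤ P.corootMult γ α := by
          rw [hsign γ (P.posRoots_subset hγ)]
          exact mul_nonneg ((P.mem_posRoots.mp hγ).2 α hα)
            (div_pos (P.B_root_pos hαΦ) (P.B_root_pos (P.posRoots_subset hγ))).le
        have h2 := hdh.2 γ hγ α hα
        rw [hch] at h2
        obtain ⟨k, hk⟩ := P.corootMult_int (P.posRoots_subset hγ) hα
        rw [hk] at h1 h2 ⊢
        have hk0 : (0:ℤ) ≤ k := by exact_mod_cast h1
        have hk1 : k ≤ 1 := by exact_mod_cast h2
        interval_cases k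
        · left; norm_num
        · right; norm_num
      have hboundΦ : ∀ γ ∈ P.Φ,
          P.corootMult γ α = 0 ∨ P.corootMult γ α = 1 ∨ P.corootMult γ α = -1 := by
        intro γ hγ
        rcases P.pos_or_neg_mem hγ with hp | hp
        · rcases hbound γ hp with h' | h'
          · exact Or.inl h'
          · exact Or.inr (Or.inl h')
        · rcases hbound (-γ) hp with h' | h' <;> rw [P.corootMult_neg γ hα] at h'
          · exact Or.inl (by linarith)
          · exact Or.inr (Or.inr (by linarith))
      simp only [Set.mem_insert_iff, Set.mem_singleton_iff]
      rcases hboundΦ (w β) hwβ with h1 | h1 | h1 <;>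
        rcases hboundΦ β hβ with h2 | h2 | h2 <;>
        first
          | (exact absurd h2 hfβ)
          | (rw [h1, h2]; norm_num)
end

section
/- Let (V, Φ) be a reduced irreducible root system with base Δ. Let α ∈ Δ be a simple root and β ∈ Φ⁺ a long positive root. Assume (1) (β, α') ≤ 0 for all α' ∈ Δ \ {α}, and (2) the multiplicity of α in β satisfies m_β(α) ≤ 1. Then β = α. -/
open scoped BigOperators

open RootSystemBase in
/-- **Lemma.** If `α ∈ Δ`, `β ∈ Φ⁺` is long, `(β, α') ≤ 0` for all simple `α' ≠ α`,
and the multiplicity of `α` in `β` is at most `1`, then `β = α`. -/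
theorem eq_simple_of_long_of_nonpos_pairings_of_mult_le_one
    {V : Type*} [AddCommGroup V] [Module ℚ V] [FiniteDimensional ℚ V]
    (P : RootSystemBase V) (α : V) (hα : α ∈ P.Δ)
    (β : V) (hβ : β ∈ P.posRoots) (hlong : P.IsLong β)
    (h1 : ∀ α' ∈ P.Δ, α' ≠ α → P.B β α' ≤ 0)
    (h2 : P.coord β α ≤ 1) :
    β = α := by
  classical
  obtain ⟨hβΦ, hβpos⟩ := Finset.mem_filter.mp hβ
  have hαΦ : α ∈ P.Φ := P.Δ_sub hα
  have hα0 : α ≠ 0 := fun h => P.zero_notMem (h ▸ hαΦ)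
  have hαα : 0 < P.B α α := P.B_posdef α hα0
  have hβ0 : β ≠ 0 := fun h => P.zero_notMem (h ▸ hβΦ)
  have hββ : 0 < P.B β β := P.B_posdef β hβ0
  have hm0 : 0 ≤ P.coord β α := hβpos α hα
  have hsum : P.B β β = ∑ α' ∈ P.Δ, P.coord β α' * P.B β α' := by
    have h := congrArg (P.B β) (P.coord_spec β)
    simpa [map_sum, map_smul, smul_eq_mul] using h
  have hkey : P.B β β ≤ P.coord β α * P.B β α := by
    rw [hsum, ← Finset.add_sum_erase _ _ hα]
    have hrest : ∑ α' ∈ P.Δ.erase α, P.coord β α' * P.B β α' ≤ 0 :=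
      Finset.sum_nonpos fun α' hα' => by
        obtain ⟨hne, hmem⟩ := Finset.mem_erase.mp hα'
        exact mul_nonpos_of_nonneg_of_nonpos (hβpos α' hmem) (h1 α' hmem hne)
    linarith
  have hβα : 0 < P.B β α := by nlinarith
  have hle1 : P.B β β ≤ P.B β α := by nlinarith
  have hBnn : ∀ v : V, 0 ≤ P.B v v := fun v => by
    by_cases h : v = 0
    · simp [h]
    · exact le_of_lt (P.B_posdef v h)
  set v : V := (P.B α α) • β - (P.B β α) • α with hvdef
  have hexp : P.B v v =
      P.B α α * (P.B α α * P.B β β - P.B β α * P.B β α) := by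
    simp only [hvdef, map_sub, map_smul, LinearMap.sub_apply, LinearMap.smul_apply,
      smul_eq_mul]
    rw [P.B_symm α β]
    ring
  have hcs : P.B β α * P.B β α ≤ P.B β β * P.B α α := by
    have := hBnn v
    nlinarith
  have hlen : P.B α α ≤ P.B β β := hlong α hαΦ
  have hle2 : P.B β α ≤ P.B β β := by nlinarith
  have heq : P.B β α = P.B β β := le_antisymm hle2 hle1
  have hcs' : P.B β α * P.B β α = P.B β β * P.B α α := by nlinarith
  have hv0 : v = 0 := by
    by_contra h
    have := P.B_posdef v h
    rw [hexp] at this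
    nlinarith
  have hβeq : β = (P.B β α / P.B α α) • α := by
    have h' : (P.B α α) • β = (P.B β α) • α := by
      rw [sub_eq_zero] at hv0; exact hv0
    have := congrArg (fun x => (P.B α α)⁻¹ • x) h'
    simp only [smul_smul] at this
    rw [inv_mul_cancel₀ (ne_of_gt hαα), one_smul] at this
    rw [div_eq_inv_mul]; exact this
  have hc : (P.B β α / P.B α α) = 1 ∨ (P.B β α / P.B α α) = -1 := by
    refine P.reduced α hαΦ _ ?_
    rw [← hβeq]; exact hβΦ
  have hcpos : 0 < P.B β α / P.B α α := div_pos hβα hαα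
  rcases hc with hc | hc
  · rw [hβeq, hc, one_smul]
  · rw [hc] at hcpos; norm_num at hcpos
end

section
/- Let (V, Φ) be a reduced irreducible root system with base Δ. Let α ∈ Δ be a simple root and β ∈ Φ⁺ a long positive root with (β, α') ≤ 0 for all α' ∈ Δ \ {α} and m_β(α) ≤ 1. Then (β, α) > 0; that is, α is the unique simple root having strictly positive pairing with β. -/
open scoped BigOperators

open RootSystemBase in
/-- If `α ∈ Δ`, `β ∈ Φ⁺` is long, `(β, α') ≤ 0` for all simple `α' ≠ α`, and
`m_β(α) ≤ 1`, then `(β, α) > 0`: `α` is the unique simple root with strictly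
positive pairing with `β`. -/
theorem pos_pairing_of_long_of_nonpos_pairings_of_mult_le_one
    {V : Type*} [AddCommGroup V] [Module ℚ V] [FiniteDimensional ℚ V]
    (P : RootSystemBase V) (α : V) (hα : α ∈ P.Δ)
    (β : V) (hβ : β ∈ P.posRoots) (hlong : P.IsLong β)
    (h1 : ∀ α' ∈ P.Δ, α' ≠ α → P.B β α' ≤ 0)
    (h2 : P.coord β α ≤ 1) :
    0 < P.B β α ∧ ∀ α' ∈ P.Δ, 0 < P.B β α' → α' = α := by
  classical
  have hβΦ : β ∈ P.Φ := (Finset.mem_filter.mp hβ).1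
  have hcoord : ∀ α' ∈ P.Δ, 0 ≤ P.coord β α' := (Finset.mem_filter.mp hβ).2
  have hβ0 : β ≠ 0 := fun h => P.zero_notMem (h ▸ hβΦ)
  have hpos : 0 < P.B β β := P.B_posdef β hβ0
  have hexp : P.B β β = ∑ α' ∈ P.Δ, P.coord β α' * P.B β α' := by
    conv_lhs => rw [show (P.B β) β = (P.B β) (∑ α' ∈ P.Δ, P.coord β α' • α') from by
      rw [← P.coord_spec β]]
    rw [map_sum]
    simp [smul_eq_mul]
  have hrest : ∑ α' ∈ P.Δ.erase α, P.coord β α' * P.B β α' ≤ 0 := by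
    apply Finset.sum_nonpos
    intro x hx
    have hxΔ := Finset.mem_of_mem_erase hx
    have hxne := Finset.ne_of_mem_erase hx
    exact mul_nonpos_of_nonneg_of_nonpos (hcoord x hxΔ) (h1 x hxΔ hxne)
  have hsplit : P.B β β = P.coord β α * P.B β α
      + ∑ α' ∈ P.Δ.erase α, P.coord β α' * P.B β α' := by
    rw [hexp, ← Finset.add_sum_erase _ _ hα]
  have hterm : 0 < P.coord β α * P.B β α := by linarith
  have hBpos : 0 < P.B β α := by
    by_contra h
    push_neg at h
    nlinarith [hcoord α hα]
  exact ⟨hBpos, fun α' hα' hp => by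
    by_contra hne
    exact absurd hp (not_lt.mpr (h1 α' hα' hne))⟩
end
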